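/- arXiv:2003.11225 — 9 statements merged into one kernel-verified Lean document; each statement's English description precedes it below -/
import Mathlib

section
/- Let α be a composition compatible with σ ∈ S_{ℓ(α)} and let τ be a standard permuted composition tableau of shape α and type σ. If 1 ≤ i, j ≤ ℓ(α), σ(i) < σ(j), and for m := min(α_i, α_j) one has τ(i,m) > τ(j,m), then i < j. -/
/-- `α` is compatible with `σ`: `α_i ≥ α_j` whenever `i < j` and `σ(i) > σ(j)`. -/
def Compatible {ℓ : ℕ} (α : Fin ℓ → ℕ) (σ : Equiv.Perm (Fin ℓ)) : Prop :=
  ∀ i j : Fin ℓ, i < j → σ j < σ i → α j ≤ α i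

/-- `τ` is a standard permuted composition tableau (SPCT) of shape `α` (a composition of `n`
with `ℓ` rows, row `i` having boxes in columns `0,…,α i − 1`) and type `σ`:
the boxes are filled with the distinct entries `1,…,n`; the standardization of the first
column read top to bottom is `σ` (expressed by order-equivalence with `σ`); rows weakly
decrease left to right; and the triple condition holds. -/
def IsSPCT {ℓ : ℕ} (n : ℕ) (α : Fin ℓ → ℕ) (σ : Equiv.Perm (Fin ℓ))
    (τ : Fin ℓ → ℕ → ℕ) : Prop :=
  (∀ (i : Fin ℓ) (c : ℕ), c < α i → 1 ≤ τ i c ∧ τ i c ≤ n) ∧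
  (∀ (i : Fin ℓ) (c : ℕ) (i' : Fin ℓ) (c' : ℕ),
      c < α i → c' < α i' → τ i c = τ i' c' → i = i' ∧ c = c') ∧
  (∀ v : ℕ, 1 ≤ v → v ≤ n → ∃ (i : Fin ℓ) (c : ℕ), c < α i ∧ τ i c = v) ∧
  (∀ i i' : Fin ℓ, τ i 0 < τ i' 0 ↔ σ i < σ i') ∧
  (∀ (i : Fin ℓ) (c : ℕ), c + 1 < α i → τ i (c + 1) ≤ τ i c) ∧
  (∀ (i i' : Fin ℓ) (c : ℕ), i < i' → c < α i → c + 1 < α i' →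
      τ i' (c + 1) < τ i c → c + 1 < α i ∧ τ i' (c + 1) < τ i (c + 1))

/-- `d` is a descent of `τ`: the entry `d+1` lies weakly to the right of `d`. -/
def IsDescent {ℓ : ℕ} (α : Fin ℓ → ℕ) (τ : Fin ℓ → ℕ → ℕ) (d : ℕ) : Prop :=
  ∃ (i : Fin ℓ) (c : ℕ) (i' : Fin ℓ) (c' : ℕ),
    c < α i ∧ c' < α i' ∧ τ i c = d ∧ τ i' c' = d + 1 ∧ c ≤ c'

/-- `τ` is a source tableau: an SPCT such that for every non-descent `d ≠ n`, the entry
`d+1` lies in the box immediately to the left of the box containing `d`. -/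
def IsSourceTableau {ℓ : ℕ} (n : ℕ) (α : Fin ℓ → ℕ) (σ : Equiv.Perm (Fin ℓ))
    (τ : Fin ℓ → ℕ → ℕ) : Prop :=
  IsSPCT n α σ τ ∧
  ∀ d : ℕ, 1 ≤ d → d + 1 ≤ n → ¬ IsDescent α τ d →
    ∀ (i : Fin ℓ) (c : ℕ), c < α i → τ i c = d → ∃ c', c = c' + 1 ∧ τ i c' = d + 1

/-- `(i,j)` is a permutation-ascending composition-descending (PACD) pair for `(α; σ)`. -/
def PACD {ℓ : ℕ} (α : Fin ℓ → ℕ) (σ : Equiv.Perm (Fin ℓ)) (i j : Fin ℓ) : Prop :=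
  i < j ∧ σ i < σ j ∧ 2 ≤ α j ∧ α j ≤ α i

/-- `α` is `σ`-simple: it is compatible with `σ` and every PACD pair satisfies C1 or C2. -/
def SigmaSimple {ℓ : ℕ} (α : Fin ℓ → ℕ) (σ : Equiv.Perm (Fin ℓ)) : Prop :=
  Compatible α σ ∧
  ∀ i j : Fin ℓ, PACD α σ i j →
    (∃ k, i < k ∧ k < j ∧ σ i < σ k ∧ σ k < σ j ∧ α k = α j - 1) ∨
    (∃ k, j < k ∧ σ i < σ k ∧ σ k < σ j ∧ α k = α j)

/-- The part `α_j` has a removable node with respect to `σ`: either `σ(j) = 1`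
(the smallest value, `0` in `Fin ℓ`), or `α_j ≥ 2`, no `k < j` has `σ(k) < σ(j)` and
`α_k = α_j − 1`, and no `k > j` has `σ(k) < σ(j)` and `α_k = α_j`. -/
def Removable {ℓ : ℕ} (α : Fin ℓ → ℕ) (σ : Equiv.Perm (Fin ℓ)) (j : Fin ℓ) : Prop :=
  (σ j : ℕ) = 0 ∨
  (2 ≤ α j ∧ (∀ k, k < j → σ k < σ j → α k ≠ α j - 1) ∧
    (∀ k, j < k → σ k < σ j → α k ≠ α j))

/-- The canonical source tableau `τ^σ_{C,α}`: row `r` is filled, in decreasing order from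
left to right, with the consecutive block of integers following all entries of rows `r'`
with `σ r' < σ r`. -/
def canonEntry {ℓ : ℕ} (α : Fin ℓ → ℕ) (σ : Equiv.Perm (Fin ℓ)) (r : Fin ℓ) (c : ℕ) : ℕ :=
  (∑ j ∈ Finset.univ.filter (fun j => σ j < σ r), α j) + α r - c

/-- If `τ` is an SPCT of shape `α` (compatible with `σ`) and type `σ`,
`σ(i) < σ(j)`, and for `m := min(α_i, α_j)` one has `τ(i,m) > τ(j,m)` (last common column,
0-based `m − 1`), then `i < j`. -/
theorem spct_type_dependence {ℓ n : ℕ} (α : Fin ℓ → ℕ) (σ : Equiv.Perm (Fin ℓ))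
    (hpos : ∀ i, 0 < α i) (hsum : ∑ i, α i = n) (hcomp : Compatible α σ)
    (τ : Fin ℓ → ℕ → ℕ) (hτ : IsSPCT n α σ τ) (i j : Fin ℓ) (hσ : σ i < σ j)
    (h : τ j (min (α i) (α j) - 1) < τ i (min (α i) (α j) - 1)) :
    i < j := by
  obtain ⟨hrange, hinj, hsurj, hcol, hrow, htriple⟩ := hτ
  rcases lt_trichotomy i j with hij | hij | hij
  · exact hij
  · subst hij; exact absurd h (lt_irrefl _)
  · -- j < i, derive contradiction
    exfalso
    have hne : i ≠ j := ne_of_gt hij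
    have hαle : α i ≤ α j := hcomp j i hij hσ
    have hm : min (α i) (α j) = α i := min_eq_left hαle
    rw [hm] at h
    have hai : 0 < α i := hpos i
    have hP : ∃ c, τ j c < τ i c := ⟨α i - 1, h⟩
    set c := Nat.find hP with hc
    have hcspec : τ j c < τ i c := Nat.find_spec hP
    have hfind : ∀ m, m < c → ¬ τ j m < τ i m := fun m hm => Nat.find_min hP hm
    clear_value c
    have hcle : c ≤ α i - 1 := by rw [hc]; exact Nat.find_min' hP h
    have hclt : c < α i := lt_of_le_of_lt hcle (Nat.sub_lt hai one_pos)
    have hcltj : c < α j := lt_of_lt_of_le hclt hαle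
    have hc0 : c ≠ 0 := by
      intro h0
      have := (hcol i j).mpr hσ
      rw [h0] at hcspec
      omega
    obtain ⟨c', rfl⟩ := Nat.exists_eq_succ_of_ne_zero hc0
    simp only [Nat.succ_eq_add_one] at hcspec hclt hcltj
    have hmin : ¬ τ j c' < τ i c' := hfind c' (Nat.lt_succ_self c')
    have hc'i : c' < α i := Nat.lt_of_succ_lt hclt
    have hc'j : c' < α j := Nat.lt_of_succ_lt hcltj
    have hne' : τ i c' ≠ τ j c' := fun he => hne (hinj i c' j c' hc'i hc'j he).1
    have h1 : τ i c' < τ j c' := lt_of_le_of_ne (not_lt.mp hmin) hne'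
    have h2 : τ i (c' + 1) ≤ τ i c' := hrow i c' hclt
    have h3 : τ i (c' + 1) < τ j c' := lt_of_le_of_lt h2 h1
    have := (htriple j i c' hij hc'j hclt h3).2
    omega
end

section
/- Let α be a composition compatible with σ and τ an SPCT of shape α and type σ. Fix rows i < i+1 ≤ ℓ(α) and set p := min(α_i, α_{i+1}). If there exists 1 ≤ k ≤ p such that τ(i,k) > τ(i+1,k), then τ(i,m) > τ(i+1,m) for all k ≤ m ≤ p. -/
/-- For an SPCT `τ` and consecutive rows `i`, `i+1` with `p := min(α_i, α_{i+1})`: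
if `τ(i,k) > τ(i+1,k)` for some column `k` (0-based, `k < p`), then
`τ(i,m) > τ(i+1,m)` for all `k ≤ m < p`. -/
theorem spct_row_domination {ℓ n : ℕ} (α : Fin ℓ → ℕ) (σ : Equiv.Perm (Fin ℓ))
    (hpos : ∀ i, 0 < α i) (hsum : ∑ i, α i = n) (hcomp : Compatible α σ)
    (τ : Fin ℓ → ℕ → ℕ) (hτ : IsSPCT n α σ τ)
    (i : ℕ) (hi : i + 1 < ℓ) (k : ℕ)
    (hk : k < min (α ⟨i, Nat.lt_of_succ_lt hi⟩) (α ⟨i + 1, hi⟩))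
    (h : τ ⟨i + 1, hi⟩ k < τ ⟨i, Nat.lt_of_succ_lt hi⟩ k) :
    ∀ m, k ≤ m → m < min (α ⟨i, Nat.lt_of_succ_lt hi⟩) (α ⟨i + 1, hi⟩) →
      τ ⟨i + 1, hi⟩ m < τ ⟨i, Nat.lt_of_succ_lt hi⟩ m := by
  obtain ⟨-, -, -, -, hrow, htri⟩ := hτ
  intro m hkm
  induction m with
  | zero =>
    intro _
    have : k = 0 := Nat.le_zero.mp hkm
    rwa [this] at h
  | succ m ih =>
    intro hm1
    rcases Nat.lt_or_ge k (m+1) with hk' | hk'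
    · have hmk : k ≤ m := Nat.lt_succ_iff.mp hk'
      have hmlt : m < min (α ⟨i, Nat.lt_of_succ_lt hi⟩) (α ⟨i + 1, hi⟩) :=
        Nat.lt_of_succ_lt hm1
      have hprev := ih hmk hmlt
      have h1 : τ ⟨i + 1, hi⟩ (m + 1) ≤ τ ⟨i + 1, hi⟩ m :=
        hrow _ m (lt_of_lt_of_le hm1 (Nat.min_le_right _ _))
      have h2 : τ ⟨i + 1, hi⟩ (m + 1) < τ ⟨i, Nat.lt_of_succ_lt hi⟩ m :=
        lt_of_le_of_lt h1 hprev
      have hlt : (⟨i, Nat.lt_of_succ_lt hi⟩ : Fin ℓ) < ⟨i + 1, hi⟩ :=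
        Nat.lt_succ_self i
      exact (htri _ _ m hlt (lt_of_lt_of_le hmlt (Nat.min_le_left _ _))
        (lt_of_lt_of_le hm1 (Nat.min_le_right _ _)) h2).2
    · have : k = m + 1 := le_antisymm hkm hk'
      rwa [this] at h
end

section
/- Let α be a σ-simple composition. Then the part α_j has a removable node with respect to σ if and only if either σ(j) = 1, or both: (i) for all i < j with σ(i) < σ(j), one has α_i ≤ α_j − 2; and (ii) for all i > j with σ(i) < σ(j), one has α_i ≠ α_j. -/
/-- For a `σ`-simple composition `α`, the part `α_j` has a removable node with respect to
`σ` if and only if either `σ(j) = 1` (i.e. `0` in `Fin ℓ`), or both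
(i) `α_i ≤ α_j − 2` for all `i < j` with `σ(i) < σ(j)`, and
(ii) `α_i ≠ α_j` for all `i > j` with `σ(i) < σ(j)`. -/
theorem removable_iff_of_sigmaSimple {ℓ : ℕ} (α : Fin ℓ → ℕ) (σ : Equiv.Perm (Fin ℓ))
    (hpos : ∀ i, 0 < α i) (hs : SigmaSimple α σ) (j : Fin ℓ) :
    Removable α σ j ↔
      ((σ j : ℕ) = 0 ∨
        ((∀ i, i < j → σ i < σ j → α i + 2 ≤ α j) ∧
          (∀ i, j < i → σ i < σ j → α i ≠ α j))) := by
  obtain ⟨hcomp, hsimple⟩ := hs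
  constructor
  · rintro (h0 | ⟨h2, hR2, hR3⟩)
    · exact Or.inl h0
    · refine Or.inr ⟨?_, fun i hij hσ => hR3 i hij hσ⟩
      intro i hij hσ
      by_contra hlt
      push_neg at hlt
      rcases lt_or_ge (α i) (α j) with h | h
      · exact hR2 i hij hσ (by omega)
      · rcases hsimple i j ⟨hij, hσ, h2, h⟩ with
          ⟨k, _, hkj, _, hkσ, hk⟩ | ⟨k, hjk, _, hkσ, hk⟩
        · exact hR2 k hkj hkσ hk
        · exact hR3 k hjk hkσ hk
  · rintro (h0 | ⟨h1, h2⟩)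
    · exact Or.inl h0
    by_cases h0 : (σ j : ℕ) = 0
    · exact Or.inl h0
    refine Or.inr ⟨?_, fun k hkj hσ hk => ?_, fun k hjk hσ => h2 k hjk hσ⟩
    · have hℓ : 0 < ℓ := j.pos
      set i := σ.symm ⟨0, hℓ⟩ with hi
      have hσi : (σ i : ℕ) = 0 := by simp [hi]
      have hσlt : σ i < σ j := by
        rw [Fin.lt_def, hσi]
        omega
      rcases lt_trichotomy i j with h | h | h
      · have := h1 i h hσlt
        have := hpos i
        omega
      · rw [h] at hσi; exact absurd hσi h0
      · have hle := hcomp j i h hσlt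
        have := h2 i h hσlt
        have := hpos i
        omega
    · have := h1 k hkj hσ
      have := hpos j
      omega
end

section
/- Let α = (α₁,...,α_ℓ) be a σ-simple composition. If the part α_m has a removable node with respect to σ, then the composition (α₁,...,α_m − 1,...,α_ℓ) (with zero parts removed if α_m = 1) is σ̄-simple, where σ̄ = σ if α_m > 1, and σ̄ = σ_↓ (σ with the value 1 removed and remaining values decreased by 1) if α_m = 1. -/
/-- If `α` is `σ`-simple and the part `α_m` has a removable node, then the composition
obtained by decreasing `α_m` by one (removing the part entirely if `α_m = 1`) is
`σ̄`-simple, where `σ̄ = σ` if `α_m > 1`, and `σ̄ = σ_↓` (characterized as the unique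
permutation of `Fin ℓ` order-equivalent to `σ` restricted away from position `m`) if
`α_m = 1`. -/
theorem sigmaSimple_remove_node {ℓ : ℕ} (α : Fin (ℓ + 1) → ℕ) (σ : Equiv.Perm (Fin (ℓ + 1)))
    (hpos : ∀ i, 0 < α i) (hs : SigmaSimple α σ) (m : Fin (ℓ + 1))
    (hrem : Removable α σ m) :
    (1 < α m → SigmaSimple (Function.update α m (α m - 1)) σ) ∧
    (α m = 1 → ∀ σ' : Equiv.Perm (Fin ℓ),
      (∀ i j : Fin ℓ, σ' i < σ' j ↔ σ (m.succAbove i) < σ (m.succAbove j)) →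
      SigmaSimple (fun i => α (m.succAbove i)) σ') := by
  obtain ⟨hcomp, hpacd⟩ := hs
  constructor
  · -- Case α m > 1
    intro h1
    have hα'm : Function.update α m (α m - 1) m = α m - 1 := Function.update_self m _ α
    have hα'ne : ∀ k : Fin (ℓ + 1), k ≠ m → Function.update α m (α m - 1) k = α k :=
      fun k hk => Function.update_of_ne hk _ _
    have hkey : ∀ i : Fin (ℓ + 1), σ i < σ m →
        ((∀ k, k < m → σ k < σ m → α k ≠ α m - 1) ∧
         (∀ k, m < k → σ k < σ m → α k ≠ α m)) := by
      intro i hσ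
      rcases hrem with h0 | ⟨_, hL, hR⟩
      · rw [Fin.lt_def, h0] at hσ; omega
      · exact ⟨hL, hR⟩
    have hnoend : ∀ i : Fin (ℓ + 1), ¬ PACD α σ i m := by
      rintro i ⟨hlt, hσ, h2, hle⟩
      obtain ⟨hL, hR⟩ := hkey i hσ
      rcases hpacd i m ⟨hlt, hσ, h2, hle⟩ with ⟨k, hk1, hk2, hk3, hk4, hk5⟩ |
        ⟨k, hk1, hk2, hk3, hk4⟩
      · exact hL k hk2 hk4 hk5
      · exact hR k hk1 hk3 hk4
    constructor
    · -- Compatibility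
      intro i j hij hσ
      by_cases hj : j = m
      · subst hj
        have hi : i ≠ j := ne_of_lt hij
        rw [hα'm, hα'ne i hi]
        have := hcomp i j hij hσ
        omega
      · rw [hα'ne j hj]
        by_cases hi : i = m
        · subst hi
          rw [hα'm]
          obtain ⟨hL, hR⟩ := hkey j hσ
          have h1' := hcomp i j hij hσ
          have h2' := hR j hij hσ
          omega
        · rw [hα'ne i hi]; exact hcomp i j hij hσ
    · -- PACD condition
      rintro i j ⟨hij, hσ, h2, hle⟩
      by_cases hj : j = m
      · -- pair ending at m : impossible
        exfalso
        subst hj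
        have hi : i ≠ j := ne_of_lt hij
        rw [hα'm] at h2 hle
        rw [hα'ne i hi] at hle
        obtain ⟨hL, hR⟩ := hkey i hσ
        by_cases hαi : α i = α j - 1
        · exact hL i hij hσ hαi
        · exact hnoend i ⟨hij, hσ, by omega, by omega⟩
      · by_cases hi : i = m
        · -- pair starting at m
          subst hi
          rw [hα'ne j hj] at h2 hle
          rw [hα'm] at hle
          rcases hpacd i j ⟨hij, hσ, h2, by omega⟩ with ⟨k, hk1, hk2, hk3, hk4, hk5⟩ |
            ⟨k, hk1, hk2, hk3, hk4⟩
          · refine Or.inl ⟨k, hk1, hk2, hk3, hk4, ?_⟩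
            rw [hα'ne k (ne_of_gt hk1), hα'ne j hj]
            exact hk5
          · refine Or.inr ⟨k, hk1, hk2, hk3, ?_⟩
            rw [hα'ne k (ne_of_gt (hij.trans hk1)), hα'ne j hj]
            exact hk4
        · -- pair avoiding m
          rw [hα'ne j hj] at h2 hle
          rw [hα'ne i hi] at hle
          rcases hpacd i j ⟨hij, hσ, h2, hle⟩ with ⟨k, hk1, hk2, hk3, hk4, hk5⟩ |
            ⟨k, hk1, hk2, hk3, hk4⟩
          · by_cases hk : k = m
            · subst hk
              exact absurd ⟨hk1, hk3, by omega, by omega⟩ (hnoend i)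
            · refine Or.inl ⟨k, hk1, hk2, hk3, hk4, ?_⟩
              rw [hα'ne k hk, hα'ne j hj]
              exact hk5
          · by_cases hk : k = m
            · subst hk
              exact absurd ⟨hij.trans hk1, hk2, by omega, by omega⟩ (hnoend i)
            · refine Or.inr ⟨k, hk1, hk2, hk3, ?_⟩
              rw [hα'ne k hk, hα'ne j hj]
              exact hk4
  · -- Case α m = 1
    intro h1 σ' hσ'
    have h0 : (σ m : ℕ) = 0 := by
      rcases hrem with h0 | ⟨h2, _, _⟩
      · exact h0
      · omega
    have hmono : ∀ i j : Fin ℓ, m.succAbove i < m.succAbove j ↔ i < j := fun i j =>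
      Fin.succAbove_lt_succAbove_iff
    constructor
    · intro i j hij hσ
      exact hcomp (m.succAbove i) (m.succAbove j) ((hmono i j).mpr hij) ((hσ' j i).mp hσ)
    · rintro i j ⟨hij, hσ, h2, hle⟩
      have hp : PACD α σ (m.succAbove i) (m.succAbove j) :=
        ⟨(hmono i j).mpr hij, (hσ' i j).mp hσ, h2, hle⟩
      rcases hpacd _ _ hp with ⟨k, hk1, hk2, hk3, hk4, hk5⟩ | ⟨k, hk1, hk2, hk3, hk4⟩
      · have hkm : k ≠ m := by
          intro h; subst h
          rw [Fin.lt_def, h0] at hk3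
          omega
        obtain ⟨k', rfl⟩ := Fin.exists_succAbove_eq hkm
        exact Or.inl ⟨k', (hmono i k').mp hk1, (hmono k' j).mp hk2, (hσ' i k').mpr hk3,
          (hσ' k' j).mpr hk4, hk5⟩
      · have hkm : k ≠ m := by
          intro h; subst h
          rw [Fin.lt_def, h0] at hk2
          omega
        obtain ⟨k', rfl⟩ := Fin.exists_succAbove_eq hkm
        exact Or.inr ⟨k', (hmono j k').mp hk1, (hσ' i k').mpr hk2, (hσ' k' j).mpr hk3, hk4⟩
end

section
/- Let α be a composition of n compatible with σ ∈ S_{ℓ(α)}. The canonical filling τ^σ_{C,α} of the composition diagram of α — in which, for 1 ≤ i ≤ ℓ(α), the row σ^{-1}(i) is filled with the consecutive integers (Σ_{j<i} α_{σ^{-1}(j)}) + 1, ..., (Σ_{j<i} α_{σ^{-1}(j)}) + α_{σ^{-1}(i)} in decreasing order from left to right — is a standard permuted composition tableau of shape α and type σ. -/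
section Aux

variable {ℓ : ℕ} (α : Fin ℓ → ℕ) (σ : Equiv.Perm (Fin ℓ))

/-- Sum of the rows preceding row `r` in the order given by `σ`. -/
def canonS (r : Fin ℓ) : ℕ := ∑ j ∈ Finset.univ.filter (fun j => σ j < σ r), α j

lemma canonS_block (i i' : Fin ℓ) (h : σ i < σ i') : canonS α σ i + α i ≤ canonS α σ i' := by
  have hsub : insert i (Finset.univ.filter (fun j => σ j < σ i)) ⊆
      Finset.univ.filter (fun j => σ j < σ i') := by
    intro x hx
    simp only [Finset.mem_insert, Finset.mem_filter, Finset.mem_univ, true_and] at hx ⊢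
    rcases hx with rfl | hx
    · exact h
    · exact hx.trans h
  have hni : i ∉ Finset.univ.filter (fun j => σ j < σ i) := by simp
  calc canonS α σ i + α i = ∑ j ∈ insert i (Finset.univ.filter (fun j => σ j < σ i)), α j := by
        simp only [canonS, Finset.sum_insert hni]; ring
    _ ≤ canonS α σ i' := Finset.sum_le_sum_of_subset hsub

lemma canonS_total (i : Fin ℓ) : canonS α σ i + α i ≤ ∑ j, α j := by
  have hni : i ∉ Finset.univ.filter (fun j => σ j < σ i) := by simp
  calc canonS α σ i + α i = ∑ j ∈ insert i (Finset.univ.filter (fun j => σ j < σ i)), α j := by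
        simp only [canonS, Finset.sum_insert hni]; ring
    _ ≤ ∑ j, α j := Finset.sum_le_sum_of_subset (Finset.subset_univ _)

/-- Prefix sums of the parts in `σ`-order, as a function on `ℕ`. -/
def canonB (m : ℕ) : ℕ := if h : m < ℓ then α (σ.symm ⟨m, h⟩) else 0

def canonG (k : ℕ) : ℕ := ∑ j ∈ Finset.range k, canonB α σ j

lemma canonG_top : canonG α σ ℓ = ∑ j, α j := by
  rw [canonG, Finset.sum_range fun j => canonB α σ j]
  rw [show (fun (j : Fin ℓ) => canonB α σ (j : ℕ)) = fun j => α (σ.symm j) by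
    funext j; simp [canonB, j.isLt]]
  exact Equiv.sum_comp σ.symm α

lemma canonG_eq_S (m : Fin ℓ) : canonG α σ (m : ℕ) = canonS α σ (σ.symm m) := by
  rw [canonS]
  have h1 : ∑ j ∈ Finset.univ.filter (fun j => σ j < σ (σ.symm m)), α j
      = ∑ k ∈ Finset.univ.filter (fun k => k < m), α (σ.symm k) := by
    apply Finset.sum_nbij' (fun j => σ j) (fun k => σ.symm k)
    · intro j hj
      simp only [Finset.mem_filter, Finset.mem_univ, true_and,
        Equiv.apply_symm_apply] at hj ⊢
      exact hj
    · intro k hk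
      simp only [Finset.mem_filter, Finset.mem_univ, true_and,
        Equiv.apply_symm_apply] at hk ⊢
      exact hk
    · intro j _; exact σ.symm_apply_apply j
    · intro k _; exact σ.apply_symm_apply k
    · intro j _; rw [σ.symm_apply_apply]
  rw [h1]
  rw [canonG]
  apply Finset.sum_nbij' (fun (j : ℕ) => if h : j < ℓ then (⟨j, h⟩ : Fin ℓ) else m)
    (fun (k : Fin ℓ) => (k : ℕ))
  · intro j hj
    simp only [Finset.mem_range] at hj
    have hjl : j < ℓ := hj.trans m.isLt
    simp only [hjl, dif_pos, Finset.mem_filter, Finset.mem_univ, true_and]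
    exact hj
  · intro k hk
    simp only [Finset.mem_filter, Finset.mem_univ, true_and] at hk
    simpa using hk
  · intro j hj
    simp only [Finset.mem_range] at hj
    have hjl : j < ℓ := hj.trans m.isLt
    simp [hjl]
  · intro k _
    simp [k.isLt]
  · intro j hj
    simp only [Finset.mem_range] at hj
    have hjl : j < ℓ := hj.trans m.isLt
    simp [canonB, hjl]

lemma canonG_find (k : ℕ) (v : ℕ) (hv1 : 1 ≤ v) (hv2 : v ≤ canonG α σ k) :
    ∃ j < k, canonG α σ j < v ∧ v ≤ canonG α σ (j + 1) := by
  induction k with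
  | zero => simp [canonG] at hv2; omega
  | succ k ih =>
    by_cases h : v ≤ canonG α σ k
    · obtain ⟨j, hj, h1, h2⟩ := ih h
      exact ⟨j, by omega, h1, h2⟩
    · exact ⟨k, by omega, by omega, hv2⟩

end Aux

lemma canonEntry_eq {ℓ : ℕ} (α : Fin ℓ → ℕ) (σ : Equiv.Perm (Fin ℓ)) (r : Fin ℓ) (c : ℕ) :
    canonEntry α σ r c = canonS α σ r + α r - c := rfl

/-- For `α` a composition of `n` compatible with `σ`, the canonical filling `τ^σ_{C,α}` —
row `σ⁻¹(i)` filled with the `i`-th consecutive block of integers in decreasing order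
from left to right — is a standard permuted composition tableau of shape `α` and type `σ`. -/
theorem canonical_is_SPCT {ℓ : ℕ} (α : Fin ℓ → ℕ) (σ : Equiv.Perm (Fin ℓ))
    (hpos : ∀ i, 0 < α i) (hcomp : Compatible α σ) :
    IsSPCT (∑ i, α i) α σ (canonEntry α σ) := by

  have hS := canonS_block α σ
  have hT := canonS_total α σ
  refine ⟨?_, ?_, ?_, ?_, ?_, ?_⟩
  · -- bounds
    intro i c hc
    have := hT i
    simp only [canonEntry_eq]
    omega
  · -- injectivity
    intro i c i' c' hc hc' heq
    simp only [canonEntry_eq] at heq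
    rcases lt_trichotomy (σ i) (σ i') with h | h | h
    · have := hS i i' h
      omega
    · have hii : i = i' := σ.injective h
      subst hii
      exact ⟨rfl, by omega⟩
    · have := hS i' i h
      omega
  · -- surjectivity
    intro v hv1 hv2
    obtain ⟨j, hj, h1, h2⟩ := canonG_find α σ ℓ v hv1 (by rw [canonG_top]; exact hv2)
    set m : Fin ℓ := ⟨j, hj⟩ with hm
    have hGm : canonG α σ j = canonS α σ (σ.symm m) := canonG_eq_S α σ m
    have hB : canonG α σ (j + 1) = canonG α σ j + α (σ.symm m) := by
      rw [canonG, canonG, Finset.sum_range_succ]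
      congr 1
      simp [canonB, hj, hm]
    refine ⟨σ.symm m, canonS α σ (σ.symm m) + α (σ.symm m) - v, by omega, ?_⟩
    simp only [canonEntry_eq]
    omega
  · -- first column
    intro i i'
    simp only [canonEntry_eq, Nat.sub_zero]
    constructor
    · intro h
      by_contra h'
      push_neg at h'
      rcases eq_or_lt_of_le h' with heq | hlt
      · have : i' = i := σ.injective heq
        subst this
        omega
      · have := hS i' i hlt
        have := hpos i
        omega
    · intro h
      have := hS i i' h
      have := hpos i'
      omega
  · -- rows weakly decrease
    intro i c _
    simp only [canonEntry_eq]
    omega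
  · -- triple condition
    intro i i' c hlt hc hc1 hltv
    simp only [canonEntry_eq] at hltv ⊢
    rcases lt_trichotomy (σ i) (σ i') with h | h | h
    · have := hS i i' h
      omega
    · exact absurd (σ.injective h) (ne_of_lt hlt)
    · have h1 := hS i' i h
      have h2 := hcomp i i' hlt h
      omega
end

section
/- Let α be a composition, σ ∈ S_{ℓ(α)}, and τ an SPCT of shape α and type σ with τ(m, α_m) = 1 (the entry 1 lies at the end of row m). Then the box (m, α_m) is a removable node with respect to σ: either σ(m) = 1 or α_m ≥ 2, there is no i < m with σ(i) < σ(m) and α_i = α_m − 1, and there is no i > m with σ(i) < σ(m) and α_i = α_m. -/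
/-- If `τ` is an SPCT of shape `α` and type `σ` whose entry `1` lies at the end of
row `m` (box `(m, α_m)`), then `(m, α_m)` is a removable node with respect to `σ`. -/
theorem one_at_end_removable {ℓ n : ℕ} (α : Fin ℓ → ℕ) (σ : Equiv.Perm (Fin ℓ))
    (hpos : ∀ i, 0 < α i) (hsum : ∑ i, α i = n)
    (τ : Fin ℓ → ℕ → ℕ) (hτ : IsSPCT n α σ τ) (m : Fin ℓ)
    (h1 : τ m (α m - 1) = 1) :
    Removable α σ m := by
  obtain ⟨hrange, hinj, hsurj, hcol, hrow, htriple⟩ := hτ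
  by_cases hσ : (σ m : ℕ) = 0
  · exact Or.inl hσ
  right
  have hℓ : 0 < ℓ := m.pos
  have hα2 : 2 ≤ α m := by
    by_contra h
    have hαm : α m = 1 := by have := hpos m; omega
    have h10 : τ m 0 = 1 := by simpa [hαm] using h1
    have hmin : ∀ i, σ m ≤ σ i := by
      intro i
      by_contra hlt
      push_neg at hlt
      have h2 := (hcol i m).mpr hlt
      have h3 := (hrange i 0 (hpos i)).1
      omega
    have h4 := hmin (σ.symm ⟨0, hℓ⟩)
    rw [Equiv.apply_symm_apply] at h4
    rw [Fin.le_def] at h4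
    simp at h4
    omega
  refine ⟨hα2, ?_, ?_⟩
  · intro k hk _ hαk
    have hαk1 : 1 ≤ α k := hpos k
    have hc1 : α k - 1 < α k := by omega
    have hc2 : α k - 1 + 1 < α m := by omega
    have hne : τ k (α k - 1) ≠ 1 := by
      intro he
      have := hinj k (α k - 1) m (α m - 1) hc1 (by omega) (by rw [he, h1])
      exact absurd this.1 (Fin.ne_of_lt hk)
    have hge := (hrange k (α k - 1) hc1).1
    have heq : α k - 1 + 1 = α m - 1 := by omega
    have htr := htriple k m (α k - 1) hk hc1 hc2 (by rw [heq, h1]; omega)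
    omega
  · intro k hk hσk hαk
    have key : ∀ c, c < α m → τ k c < τ m c := by
      intro c
      induction c with
      | zero => exact fun _ => (hcol k m).mpr hσk
      | succ c ih =>
        intro hc
        have h2 := ih (by omega)
        have hr := hrow k c (by omega)
        exact (htriple m k c hk (by omega) (by omega) (by omega)).2
    have h5 := key (α m - 1) (by omega)
    have h6 := (hrange k (α m - 1) (by omega)).1
    omega
end

section
/- Let α be a composition and σ ∈ S_{ℓ(α)}. If α is σ-simple, then in every source tableau τ₀ of shape α and type σ, the entry 1 occupies the rightmost box of row σ^{-1}(1), i.e., the box (σ^{-1}(1), α_{σ^{-1}(1)}). -/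
/-- If `α` is `σ`-simple, then in every source tableau of shape `α` and type `σ`, the
entry `1` occupies the rightmost box of row `σ⁻¹(1)` (the row `r` with `σ r = 0`). -/
theorem source_one_position {ℓ n : ℕ} (α : Fin ℓ → ℕ) (σ : Equiv.Perm (Fin ℓ))
    (hpos : ∀ i, 0 < α i) (hsum : ∑ i, α i = n) (hs : SigmaSimple α σ)
    (τ : Fin ℓ → ℕ → ℕ) (hτ : IsSourceTableau n α σ τ)
    (r : Fin ℓ) (hr : (σ r : ℕ) = 0) :
    τ r (α r - 1) = 1 := by
  obtain ⟨⟨hbd, hinj, hsurj, hcol, hdec, htri⟩, hsrc⟩ := hτ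
  -- n ≥ 1
  have hn1 : 1 ≤ n := by
    have : 0 < ∑ i, α i :=
      Finset.sum_pos (fun i _ => hpos i) ⟨r, Finset.mem_univ r⟩
    omega
  -- strict decrease along rows
  have hstr : ∀ (i : Fin ℓ) (c c' : ℕ), c < c' → c' < α i → τ i c' < τ i c := by
    have base : ∀ (i : Fin ℓ) (c : ℕ), c + 1 < α i → τ i (c + 1) < τ i c := by
      intro i c h
      have h1 := hdec i c h
      rcases lt_or_eq_of_le h1 with h2 | h2
      · exact h2
      · exact absurd ((hinj i (c+1) i c h (by omega) h2).2) (by omega)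
    intro i c c' hlt hb
    have key : ∀ k c, c + k + 1 < α i → τ i (c + k + 1) < τ i c := by
      intro k
      induction k with
      | zero => intro c h; exact base i c h
      | succ k ih =>
        intro c h
        have h1 : τ i (c + 1 + k + 1) < τ i (c + 1) := ih (c+1) (by omega)
        have h2 : τ i (c + 1) < τ i c := base i c (by omega)
        have he : c + 1 + k + 1 = c + (k+1) + 1 := by omega
        rw [he] at h1; omega
    have he : c' = c + (c' - c - 1) + 1 := by omega
    rw [he]; exact key (c' - c - 1) c (by omega)
  -- weak decrease general
  have hmono : ∀ (i : Fin ℓ) (c c' : ℕ), c ≤ c' → c' < α i → τ i c' ≤ τ i c := by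
    intro i c c' h h'
    rcases lt_or_eq_of_le h with h2 | h2
    · exact le_of_lt (hstr i c c' h2 h')
    · rw [h2]
  -- AHEAD lemma
  have hahead : ∀ (a b : Fin ℓ) (c : ℕ), a < b → c < α a → c < α b →
      τ a c < τ b c → τ a 0 < τ b 0 := by
    intro a b c hab hca hcb h
    have hne : a ≠ b := Fin.ne_of_lt hab
    have key : ∀ k e, e + k = c → τ a e < τ b e := by
      intro k
      induction k with
      | zero =>
        intro e he
        have heq : e = c := by omega
        subst heq; exact h
      | succ k ih =>
        intro e he
        have hIH : τ a (e+1) < τ b (e+1) := ih (e+1) (by omega)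
        have hnlt : ¬ τ b (e + 1) < τ a e := by
          intro hl
          have := htri a b e hab (by omega) (by omega) hl
          omega
        have hneq : τ a e ≠ τ b (e+1) := by
          intro hEq
          exact hne (hinj a e b (e+1) (by omega) (by omega) hEq).1
        have h2 : τ b (e+1) < τ b e := hstr b e (e+1) (by omega) (by omega)
        omega
    exact key c 0 (by omega)
  -- box of entry 1 : (j, a0), a0 + 1 = α j
  obtain ⟨j, a0, ha0lt, hτ1⟩ := hsurj 1 le_rfl hn1
  have ha0 : a0 + 1 = α j := by
    by_contra hne
    have hlt : a0 + 1 < α j := by omega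
    have h1 := hdec j a0 hlt
    have h2 := (hbd j (a0+1) hlt).1
    have h3 : τ j (a0+1) = 1 := by omega
    have := (hinj j (a0+1) j a0 hlt ha0lt (by rw [h3, hτ1])).2
    omega
  -- if σ j = 0 we are done
  by_cases hσj : (σ j : ℕ) = 0
  · have : σ j = σ r := Fin.ext (by omega)
    have hjr : j = r := σ.injective this
    subst hjr
    have : α j - 1 = a0 := by omega
    rw [this]; exact hτ1
  -- main case: σ j ≠ 0, derive False
  exfalso
  have hσrj : σ r < σ j := by
    rw [Fin.lt_def]; omega
  have hrj : r ≠ j := by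
    intro h; rw [h] at hr; exact hσj hr
  classical
  -- the run 1..m at the right end of row j
  set P : ℕ → Prop := fun t => ∀ s < t, τ j (a0 - s) = s + 1 with hPdef
  have hP1 : P 1 := by
    intro s hs
    have : s = 0 := by omega
    rw [this]; simpa using hτ1
  set m : ℕ := Nat.findGreatest P (α j) with hmdef
  have hm1 : 1 ≤ m := Nat.le_findGreatest (by omega) hP1
  have hmle : m ≤ α j := Nat.findGreatest_le _
  have hPm : P m := Nat.findGreatest_spec (P := P) (m := 1) (by omega) hP1
  -- located entries: any box with small entry is in row j
  have hbox : ∀ (u : ℕ) (i : Fin ℓ) (c : ℕ), 1 ≤ u → u ≤ m → c < α i → τ i c = u →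
      i = j ∧ c = a0 - (u - 1) := by
    intro u i c hu1 hum hc hv
    have hloc : τ j (a0 - (u-1)) = u := by
      have := hPm (u-1) (by omega)
      have he : (u - 1) + 1 = u := by omega
      rw [he] at this; exact this
    exact hinj i c j (a0 - (u-1)) hc (by omega) (by rw [hv, hloc])
  have hmlt : m < α j := by
    by_contra h
    have hm : m = α j := by omega
    have hj0 : τ j 0 = a0 + 1 := by
      have h0 := hPm a0 (by omega)
      rw [Nat.sub_self] at h0
      exact h0
    have hu : τ r 0 < τ j 0 := (hcol r j).mpr hσrj
    have hu1 := (hbd r 0 (hpos r)).1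
    have := (hbox (τ r 0) r 0 hu1 (by omega) (hpos r) rfl).1
    exact hrj this
  -- q : column of first box left of the run; p = q+1
  set q : ℕ := a0 - m with hqdef
  have hq : q + m = a0 := by omega
  have hτjp : τ j (q + 1) = m := by
    have := hPm (m-1) (by omega)
    have he : a0 - (m - 1) = q + 1 := by omega
    rw [he] at this
    have : τ j (q+1) = (m-1) + 1 := this
    omega
  have hqA : q + 1 < α j := by omega
  set y0 : ℕ := τ j q with hy0def
  have hy0m : m < y0 := by
    have := hstr j q (q+1) (by omega) hqA
    omega
  have hy0ne : y0 ≠ m + 1 := by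
    intro hy
    have hnP : ¬ P (m+1) := by
      apply Nat.findGreatest_is_greatest
      · rw [← hmdef]; omega
      · omega
    apply hnP
    intro s hs
    rcases lt_or_eq_of_le (by omega : s ≤ m) with h2 | h2
    · exact hPm s h2
    · rw [h2]
      have he : a0 - m = q := by omega
      rw [he]; exact hy
  have hy0 : m + 2 ≤ y0 := by omega
  have hyn : y0 ≤ n := (hbd j q (by omega)).2
  -- box of m+1
  obtain ⟨i1, c1, hc1, hτi1⟩ := hsurj (m+1) (by omega) (by omega)
  have hi1j : i1 ≠ j := by
    intro h; subst h
    rcases lt_trichotomy c1 q with h1 | h1 | h1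
    · have := hstr i1 c1 q h1 (by omega); omega
    · rw [h1] at hτi1
      exact hy0ne (by rw [hy0def]; exact hτi1)
    · rcases lt_or_eq_of_le (by omega : q + 1 ≤ c1) with h2 | h2
      · have := hstr i1 (q+1) c1 h2 hc1; omega
      · rw [← h2] at hτi1; omega
  -- m is a descent, so c1 ≥ q+1
  have hdesc : IsDescent α τ m := by
    by_contra hnd
    obtain ⟨c', he, hv⟩ := hsrc m hm1 (by omega) hnd j (q+1) hqA hτjp
    have : c' = q := by omega
    rw [this] at hv
    exact hy0ne (by rw [← hy0def] at hv; omega)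
  have hc1q : q + 1 ≤ c1 := by
    obtain ⟨a, b, a', b', hb, hb', he, he', hcc⟩ := hdesc
    have h1 := hinj a b j (q+1) hb hqA (by rw [he, hτjp])
    have h2 := hinj a' b' i1 c1 hb' hc1 (by rw [he', hτi1])
    omega
  -- minimal entry in columns ≤ q
  set f : Fin ℓ → ℕ := fun i => τ i (min q (α i - 1)) with hfdef
  set S : Finset ℕ := Finset.image f Finset.univ with hSdef
  have hSne : S.Nonempty := ⟨f r, Finset.mem_image.mpr ⟨r, Finset.mem_univ r, rfl⟩⟩
  set z : ℕ := S.min' hSne with hzdef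
  have hzmin : ∀ (i : Fin ℓ) (c : ℕ), c ≤ q → c < α i → z ≤ τ i c := by
    intro i c hcq hca
    have h1 : z ≤ f i := Finset.min'_le S (f i) (Finset.mem_image.mpr ⟨i, Finset.mem_univ i, rfl⟩)
    have h2 : τ i (min q (α i - 1)) ≤ τ i c := by
      apply hmono i c (min q (α i - 1)) (by omega) (by omega)
    simpa [hfdef] using le_trans h1 h2
  obtain ⟨R0, _, hfR0⟩ := Finset.mem_image.mp (S.min'_mem hSne)
  set cR : ℕ := min q (α R0 - 1) with hcRdef
  have hτR0 : τ R0 cR = z := hfR0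
  have hcRq : cR ≤ q := by omega
  have hcRa : cR < α R0 := by have := hpos R0; omega
  have hzbd := hbd R0 cR hcRa
  -- z ≥ m + 2
  have hz : m + 2 ≤ z := by
    by_contra h
    rcases lt_or_eq_of_le (by omega : z ≤ m + 1) with h1 | h1
    · have := (hbox z R0 cR (by omega) (by omega) hcRa hτR0).2
      omega
    · have := hinj R0 cR i1 c1 hcRa hc1 (by rw [hτR0, hτi1, h1])
      omega
  -- box of z - 1
  obtain ⟨i2, c2, hc2, hτz1⟩ := hsurj (z-1) (by omega) (by omega)
  have hc2q : q + 1 ≤ c2 := by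
    by_contra h
    have := hzmin i2 c2 (by omega) hc2
    omega
  -- z-1 is not a descent
  have hnd2 : ¬ IsDescent α τ (z-1) := by
    intro ⟨a, b, a', b', hb, hb', he, he', hcc⟩
    have h1 := hinj a b i2 c2 hb hc2 (by rw [he, hτz1])
    have h2 : τ a' b' = z := by rw [he']; omega
    have h3 := hinj a' b' R0 cR hb' hcRa (by rw [h2, hτR0])
    omega
  obtain ⟨c'', hc2e, hτc''⟩ := hsrc (z-1) (by omega) (by omega) hnd2 i2 c2 hc2 hτz1
  have hτc''z : τ i2 c'' = z := by rw [hτc'']; omega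
  have hi2R : i2 = R0 ∧ c'' = cR :=
    hinj i2 c'' R0 cR (by omega) hcRa (by rw [hτc''z, hτR0])
  -- so cR = q, c2 = q+1, and q+1 < α R0
  have hcRq2 : cR = q := by omega
  have hc2v : c2 = q + 1 := by omega
  have hqAR : q + 1 < α R0 := by
    have : c2 < α i2 := hc2
    rw [hi2R.1] at this; omega
  have hτRq : τ R0 q = z := by rw [← hcRq2]; exact hτR0
  have hτRq1 : τ R0 (q+1) = z - 1 := by
    have : τ i2 c2 = z - 1 := hτz1
    rw [hi2R.1, hc2v] at this; exact this
  -- R0 ≠ j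
  have hRj : R0 ≠ j := by
    intro h
    rw [h] at hτRq1
    rw [hτjp] at hτRq1
    omega
  -- z < y0
  have hzy : z < y0 := by
    have h1 : z ≤ y0 := hzmin j q le_rfl (by omega)
    rcases lt_or_eq_of_le h1 with h2 | h2
    · exact h2
    · exfalso
      exact hRj (hinj R0 q j q (by omega) (by omega) (by rw [hτRq, ← hy0def]; exact h2)).1
  rcases lt_trichotomy R0 j with hRltj | hReq | hjltR
  · -- R0 < j : first get σ R0 < σ j
    have hσR : σ R0 < σ j := by
      apply (hcol R0 j).mp
      exact hahead R0 j q hRltj (by omega) (by omega) (by rw [hτRq, ← hy0def]; exact hzy)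
    by_cases hαR : α j ≤ α R0
    · -- PACD pair (R0, j)
      rcases hs.2 R0 j ⟨hRltj, hσR, by omega, hαR⟩ with
        ⟨k, hRk, hkj, hσRk, hσkj, hαk⟩ | ⟨k, hjk, hσRk, hσkj, hαk⟩
      · -- C1 witness: α k = α j - 1, k < j
        have hkja : k ≠ j := Fin.ne_of_lt hkj
        have haj2 : 2 ≤ α j := by omega
        have hαkv : α k = a0 := by omega
        have hbk : a0 - 1 < α k := by omega
        have hτk : 1 ≤ τ k (a0 - 1) := (hbd k (a0-1) hbk).1
        have hτkne : τ k (a0 - 1) ≠ 1 := by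
          intro h
          exact hkja (hinj k (a0-1) j a0 hbk ha0lt (by rw [h, hτ1])).1
        have he : a0 - 1 + 1 = a0 := by omega
        have := htri k j (a0 - 1) hkj hbk (by omega)
          (by rw [he, hτ1]; omega)
        omega
      · -- C2 witness: α k = α j, k > j
        have hkja : k ≠ j := (Fin.ne_of_lt hjk).symm
        have hτk : 1 ≤ τ k a0 := (hbd k a0 (by omega)).1
        have hτkne : τ k a0 ≠ 1 := by
          intro h
          exact hkja (hinj k a0 j a0 (by omega) ha0lt (by rw [h, hτ1])).1
        have : σ j < σ k := by
          apply (hcol j k).mp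
          exact hahead j k a0 hjk (by omega) (by omega) (by rw [hτ1]; omega)
        exact absurd hσkj (lt_asymm this)
    · -- p < α R0 < α j : direct triple contradiction
      have hg : α R0 - 1 + 1 = α R0 := by have := hpos R0; omega
      have hbR : α R0 - 1 < α R0 := by omega
      have hbj : α R0 < α j := by omega
      set u : ℕ := τ R0 (α R0 - 1) with hudef
      have hu1 : 1 ≤ u := (hbd R0 (α R0 - 1) hbR).1
      -- τ j (α R0) is a small entry of the run
      set v : ℕ := α j - α R0 with hvdef
      have hv1 : 1 ≤ v := by omega
      have hvm : v ≤ m := by omega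
      have hτjv : τ j (α R0) = v := by
        have := hPm (v-1) (by omega)
        have he2 : a0 - (v-1) = α R0 := by omega
        rw [he2] at this
        omega
      by_cases hprem : τ j (α R0) < τ R0 (α R0 - 1)
      · have := htri R0 j (α R0 - 1) hRltj hbR (by omega) (by rw [hg]; exact hprem)
        omega
      · have huv : u ≤ v := by rw [← hτjv]; omega
        have := (hbox u R0 (α R0 - 1) hu1 (by omega) hbR rfl).1
        exact hRj this
  · exact hRj hReq
  · -- j < R0 : triple condition contradiction
    have hprem : τ R0 (q + 1) < τ j q := by
      rw [hτRq1, ← hy0def]; omega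
    have := htri j R0 q hjltR (by omega) hqAR hprem
    rw [hτRq1, hτjp] at this
    omega
end

section
/- Suppose α is compatible with σ, the part α_{σ^{-1}(ℓ)} (where ℓ = ℓ(α)) has a removable node, σ^{-1}(1) < σ^{-1}(ℓ), and α_{σ^{-1}(1)} ≥ α_{σ^{-1}(ℓ)} ≥ 2. Then the filling τ̂^σ_{C,α} — obtained by forming the canonical source tableau of shape β := (α₁,...,α_{σ^{-1}(ℓ)}−1,...,α_ℓ) and type σ, adding 1 to every entry, and appending a box filled with 1 at the end of row σ^{-1}(ℓ) — is a source tableau in SPCT^σ(α). -/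
namespace HatCanon

variable {m : ℕ} (β : Fin m → ℕ) (σ : Equiv.Perm (Fin m))

def S (i : Fin m) : ℕ := ∑ j ∈ Finset.univ.filter (fun j => σ j < σ i), β j
def T (i : Fin m) : ℕ := ∑ j ∈ Finset.univ.filter (fun j => σ j ≤ σ i), β j

lemma T_eq (i : Fin m) : T β σ i = S β σ i + β i := by
  unfold T S
  have h : Finset.univ.filter (fun j => σ j ≤ σ i)
      = insert i (Finset.univ.filter (fun j => σ j < σ i)) := by
    ext j
    simp only [Finset.mem_filter, Finset.mem_insert, Finset.mem_univ, true_and]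
    constructor
    · intro h
      rcases eq_or_lt_of_le h with h | h
      · exact Or.inl (σ.injective h)
      · exact Or.inr h
    · rintro (rfl | h)
      · exact le_refl _
      · exact le_of_lt h
  rw [h, Finset.sum_insert (by simp)]
  omega

lemma T_le_S (i i' : Fin m) (h : σ i < σ i') : T β σ i ≤ S β σ i' := by
  unfold T S
  apply Finset.sum_le_sum_of_subset
  intro j hj
  simp only [Finset.mem_filter, Finset.mem_univ, true_and] at *
  exact lt_of_le_of_lt hj h

lemma T_lt (hβ : ∀ j, 0 < β j) (i i' : Fin m) (h : σ i < σ i') : T β σ i < T β σ i' := by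
  have h1 := T_le_S β σ i i' h
  have h2 := T_eq β σ i'
  have h3 := hβ i'
  omega

lemma T_lt_iff (hβ : ∀ j, 0 < β j) (i i' : Fin m) :
    T β σ i < T β σ i' ↔ σ i < σ i' := by
  constructor
  · intro h
    rcases lt_trichotomy (σ i) (σ i') with h' | h' | h'
    · exact h'
    · exfalso; rw [σ.injective h'] at h; omega
    · exact absurd (T_lt β σ hβ i' i h') (by omega)
  · exact T_lt β σ hβ i i'

lemma S_eq_zero (i : Fin m) (h : (σ i : ℕ) = 0) : S β σ i = 0 := by
  unfold S
  have hf : Finset.univ.filter (fun j => σ j < σ i) = ∅ :=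
    Finset.filter_false_of_mem (fun j _ => by rw [Fin.lt_def, h]; omega)
  rw [hf, Finset.sum_empty]

lemma T_univ (i : Fin m) (h : (σ i : ℕ) = m - 1) : T β σ i = ∑ j, β j := by
  unfold T
  congr 1
  apply Finset.filter_true_of_mem
  intro j _
  rw [Fin.le_def, h]
  have := (σ j).isLt
  omega

lemma T_eq_S_of_succ (i'' i : Fin m) (h : (σ i'' : ℕ) + 1 = (σ i : ℕ)) :
    T β σ i'' = S β σ i := by
  unfold T S
  congr 1
  ext j
  simp only [Finset.mem_filter, Finset.mem_univ, true_and, Fin.le_def, Fin.lt_def]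
  omega

lemma exists_row (hβ : ∀ j, 0 < β j) (w : ℕ) (hw : 0 < w) (hw2 : w ≤ ∑ j, β j) :
    ∃ i, S β σ i < w ∧ w ≤ T β σ i := by
  rcases Nat.eq_zero_or_pos m with rfl | hm
  · simp at hw2; omega
  classical
  set F := Finset.univ.filter (fun i => w ≤ T β σ i) with hF
  have hne : F.Nonempty := by
    refine ⟨σ.symm ⟨m - 1, by omega⟩, ?_⟩
    simp only [hF, Finset.mem_filter, Finset.mem_univ, true_and]
    rw [T_univ β σ _ (by simp)]
    exact hw2
  obtain ⟨i, hiF, hmin⟩ := Finset.exists_min_image F (fun i => σ i) hne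
  simp only [hF, Finset.mem_filter, Finset.mem_univ, true_and] at hiF
  refine ⟨i, ?_, hiF⟩
  by_contra hS
  push_neg at hS
  have hσi : (σ i : ℕ) ≠ 0 := by
    intro h
    rw [S_eq_zero β σ i h] at hS
    omega
  have hlt2 : (σ i : ℕ) - 1 < m := by have := (σ i).isLt; omega
  set i2 := σ.symm ⟨(σ i : ℕ) - 1, hlt2⟩ with hi2
  have hσi2 : (σ i2 : ℕ) = (σ i : ℕ) - 1 := by rw [hi2, Equiv.apply_symm_apply]
  have hT2 : T β σ i2 = S β σ i := T_eq_S_of_succ β σ i2 i (by omega)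
  have hmem : i2 ∈ F := by
    simp only [hF, Finset.mem_filter, Finset.mem_univ, true_and]
    omega
  have hle := hmin i2 hmem
  rw [Fin.le_def] at hle
  omega

end HatCanon

open HatCanon

/-- Suppose `α` is compatible with `σ`, the part `α_{σ⁻¹(ℓ)}` has a removable node,
`σ⁻¹(1) < σ⁻¹(ℓ)`, and `α_{σ⁻¹(1)} ≥ α_{σ⁻¹(ℓ)} ≥ 2` (in `Fin (ℓ'+1)`, the value `1` is
`0` and `ℓ` is `Fin.last ℓ'`).  Then the filling `τ̂^σ_{C,α}` — obtained from the canonical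
source tableau of shape `β := (α₁,…,α_{σ⁻¹(ℓ)}−1,…,α_ℓ)` and type `σ` by adding `1` to
every entry and appending a box filled with `1` at the end of row `σ⁻¹(ℓ)` — is a source
tableau in `SPCT^σ(α)`. -/
theorem hat_canonical_is_source {ℓ : ℕ} (α : Fin (ℓ + 1) → ℕ) (σ : Equiv.Perm (Fin (ℓ + 1)))
    (hpos : ∀ i, 0 < α i) (hcomp : Compatible α σ)
    (hrem : Removable α σ (σ.symm (Fin.last ℓ)))
    (hlt : σ.symm 0 < σ.symm (Fin.last ℓ))
    (h2 : 2 ≤ α (σ.symm (Fin.last ℓ)))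
    (hge : α (σ.symm (Fin.last ℓ)) ≤ α (σ.symm 0)) :
    IsSourceTableau (∑ i, α i) α σ
      (fun i c =>
        if i = σ.symm (Fin.last ℓ) ∧ c = α (σ.symm (Fin.last ℓ)) - 1 then 1
        else canonEntry
          (Function.update α (σ.symm (Fin.last ℓ)) (α (σ.symm (Fin.last ℓ)) - 1)) σ i c + 1) := by
  classical
  set j0 := σ.symm (Fin.last ℓ) with hj0
  set β := Function.update α j0 (α j0 - 1) with hβdef
  have hσj0 : σ j0 = Fin.last ℓ := by rw [hj0]; exact σ.apply_symm_apply _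
  have hσj0v : (σ j0 : ℕ) = ℓ := by rw [hσj0]; exact Fin.val_last ℓ
  have hℓ : 0 < ℓ := by
    by_contra h0
    push_neg at h0
    interval_cases ℓ
    have h00 : Fin.last 0 = (0 : Fin 1) := Fin.ext (by simp)
    rw [hj0, h00] at hlt
    exact lt_irrefl _ hlt
  have hβj0 : β j0 = α j0 - 1 := by rw [hβdef]; simp
  have hβne : ∀ i, i ≠ j0 → β i = α i := by
    intro i h; rw [hβdef]; exact Function.update_of_ne h _ _
  have hβpos : ∀ i, 0 < β i := by
    intro i
    by_cases h : i = j0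
    · subst h; rw [hβj0]; omega
    · rw [hβne i h]; exact hpos i
  have hβle : ∀ i, β i ≤ α i := by
    intro i
    by_cases h : i = j0
    · subst h; rw [hβj0]; omega
    · rw [hβne i h]
  have he : (∑ j, β j) + 1 = ∑ i, α i := by
    have h1 : ∑ j, β j = (α j0 - 1) + ∑ j ∈ Finset.univ \ {j0}, α j := by
      rw [hβdef]; exact Finset.sum_update_of_mem (Finset.mem_univ j0) _ _
    have h2' : α j0 + ∑ j ∈ Finset.univ \ {j0}, α j = ∑ i, α i := by
      rw [Finset.sdiff_singleton_eq_erase]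
      exact Finset.add_sum_erase _ _ (Finset.mem_univ j0)
    omega
  obtain hrem0 | ⟨-, hrem2, hrem3⟩ := hrem
  · rw [hσj0v] at hrem0; omega
  have hσlt : ∀ i, i ≠ j0 → (σ i : ℕ) < ℓ := by
    intro i h
    have h1 : (σ i : ℕ) < ℓ + 1 := (σ i).isLt
    have h2x : (σ i : ℕ) ≠ ℓ := by
      intro he'
      exact h (σ.injective (Fin.val_injective (he'.trans hσj0v.symm)))
    omega
  have hval : ∀ i c, c < α i → ¬(i = j0 ∧ c = α j0 - 1) → c < β i := by
    intro i c hc hn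
    by_cases h : i = j0
    · subst h
      have : c ≠ α j0 - 1 := fun h' => hn ⟨rfl, h'⟩
      rw [hβj0]; omega
    · rw [hβne i h]; exact hc
  have hcanon : ∀ i c, canonEntry β σ i c = T β σ i - c := by
    intro i c
    rw [T_eq]
    rfl
  have hTβ : ∀ i, β i ≤ T β σ i := by
    intro i; rw [T_eq]; omega
  have hTle : ∀ i, T β σ i ≤ ∑ j, β j := by
    intro i
    exact Finset.sum_le_sum_of_subset (Finset.filter_subset _ _)
  have hTj0 : T β σ j0 = ∑ j, β j := T_univ β σ j0 (by omega)
  refine ⟨⟨?_, ?_, ?_, ?_, ?_, ?_⟩, ?_⟩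
  · -- bounds
    intro i c hc
    dsimp only
    by_cases hh : i = j0 ∧ c = α j0 - 1
    · rw [if_pos hh]; omega
    · rw [if_neg hh, hcanon]
      have h1 := hval i c hc hh
      have h2x := hTle i
      have h3 := hTβ i
      omega
  · -- injectivity
    intro i c i' c' hc hc' heq
    dsimp only at heq
    by_cases hh : i = j0 ∧ c = α j0 - 1 <;> by_cases hh' : i' = j0 ∧ c' = α j0 - 1
    · exact ⟨hh.1.trans hh'.1.symm, hh.2.trans hh'.2.symm⟩
    · exfalso
      rw [if_pos hh, if_neg hh', hcanon] at heq
      have h1 := hval i' c' hc' hh'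
      have h3 := hTβ i'
      omega
    · exfalso
      rw [if_neg hh, if_pos hh', hcanon] at heq
      have h1 := hval i c hc hh
      have h3 := hTβ i
      omega
    · rw [if_neg hh, if_neg hh', hcanon, hcanon] at heq
      have h1 := hval i c hc hh
      have h1' := hval i' c' hc' hh'
      have hT := T_eq β σ i
      have hT' := T_eq β σ i'
      rcases lt_trichotomy (σ i) (σ i') with hlt' | he' | hlt'
      · have := T_le_S β σ i i' hlt'
        exfalso; omega
      · have hii : i = i' := σ.injective he'
        subst hii
        exact ⟨rfl, by omega⟩
      · have := T_le_S β σ i' i hlt'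
        exfalso; omega
  · -- surjectivity
    intro v hv1 hv2
    by_cases hv : v = 1
    · subst hv
      exact ⟨j0, α j0 - 1, by omega, by dsimp only; rw [if_pos ⟨rfl, rfl⟩]⟩
    · have hw1 : 0 < v - 1 := by omega
      have hw2 : v - 1 ≤ ∑ j, β j := by omega
      obtain ⟨i, hS, hT⟩ := exists_row β σ hβpos (v - 1) hw1 hw2
      have hTeq := T_eq β σ i
      have hβlei := hβle i
      refine ⟨i, T β σ i - (v - 1), by omega, ?_⟩
      dsimp only
      have hnhat : ¬(i = j0 ∧ T β σ i - (v - 1) = α j0 - 1) := by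
        rintro ⟨hij, hcc⟩
        subst hij
        rw [hβj0] at hTeq
        omega
      rw [if_neg hnhat, hcanon]
      omega
  · -- first column
    intro i i'
    dsimp only
    have h0 : ¬(i = j0 ∧ 0 = α j0 - 1) := by rintro ⟨-, h'⟩; omega
    have h0' : ¬(i' = j0 ∧ 0 = α j0 - 1) := by rintro ⟨-, h'⟩; omega
    rw [if_neg h0, if_neg h0', hcanon, hcanon]
    rw [← T_lt_iff β σ hβpos i i']
    have := hTβ i
    have := hTβ i'
    have := hβpos i
    have := hβpos i'
    omega
  · -- rows weakly decrease
    intro i c hc1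
    dsimp only
    by_cases hh : i = j0 ∧ c + 1 = α j0 - 1
    · obtain ⟨hij, hcc⟩ := hh
      have hh2 : ¬(i = j0 ∧ c = α j0 - 1) := by rintro ⟨-, h'⟩; omega
      rw [if_pos ⟨hij, hcc⟩, if_neg hh2, hcanon]
      omega
    · have hh2 : ¬(i = j0 ∧ c = α j0 - 1) := by
        rintro ⟨hij, hcc⟩
        subst hij
        omega
      rw [if_neg hh, if_neg hh2, hcanon, hcanon]
      omega
  · -- triple condition
    intro i i' c hii hc hc' hlt'
    dsimp only at hlt' ⊢
    by_cases hhi : i = j0 ∧ c = α j0 - 1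
    · exfalso
      rw [if_pos hhi] at hlt'
      by_cases hhx : i' = j0 ∧ c + 1 = α j0 - 1
      · rw [if_pos hhx] at hlt'; omega
      · rw [if_neg hhx] at hlt'; omega
    · by_cases hhx : i' = j0 ∧ c + 1 = α j0 - 1
      · obtain ⟨hi'j, hcx⟩ := hhx
        subst hi'j
        have hine : i ≠ j0 := ne_of_lt hii
        have hσi : (σ i : ℕ) < ℓ := hσlt i hine
        have hαi : α i ≠ α j0 - 1 :=
          hrem2 i hii (by rw [Fin.lt_def, hσj0v]; exact hσi)
        have hc1 : c + 1 < α i := by omega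
        refine ⟨hc1, ?_⟩
        rw [if_pos ⟨rfl, hcx⟩]
        have hnh : ¬(i = j0 ∧ c + 1 = α j0 - 1) := fun h => hine h.1
        rw [if_neg hnh, hcanon]
        have := hval i (c + 1) hc1 hnh
        have := hTβ i
        omega
      · rw [if_neg hhi, if_neg hhx, hcanon, hcanon] at hlt'
        have hbi := hval i c hc hhi
        have hbi' := hval i' (c + 1) hc' hhx
        have hTi := T_eq β σ i
        have hTi' := T_eq β σ i'
        have hσlt' : σ i' < σ i := by
          rcases lt_trichotomy (σ i') (σ i) with h | h | h
          · exact h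
          · exact absurd (σ.injective h) (ne_of_gt hii)
          · exfalso
            have := T_lt β σ hβpos i i' h
            omega
        have hαle : α i' ≤ α i := hcomp i i' hii hσlt'
        have hc1 : c + 1 < α i := lt_of_lt_of_le hc' hαle
        refine ⟨hc1, ?_⟩
        have hnh : ¬(i = j0 ∧ c + 1 = α j0 - 1) := by
          rintro ⟨hij, hcc⟩
          subst hij
          have h3 := hrem3 i' hii hσlt'
          omega
        rw [if_neg hhx, if_neg hnh, hcanon, hcanon]
        have hTlt2 : T β σ i' < T β σ i := T_lt β σ hβpos i' i hσlt'
        omega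
  · -- source condition
    intro d hd1 hdn hnd i c hc hτd
    dsimp only at hτd
    by_cases hh : i = j0 ∧ c = α j0 - 1
    · exfalso
      rw [if_pos hh] at hτd
      apply hnd
      set r1 := σ.symm 0 with hr1
      have hσr1 : (σ r1 : ℕ) = 0 := by rw [hr1, Equiv.apply_symm_apply]; rfl
      have hr1ne : r1 ≠ j0 := by
        intro h'
        rw [h'] at hσr1
        omega
      have hS1 : S β σ r1 = 0 := S_eq_zero β σ r1 hσr1
      have hT1 : T β σ r1 = β r1 := by rw [T_eq, hS1]; omega
      have hβr1 : β r1 = α r1 := hβne r1 hr1ne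
      have hpr1 := hpos r1
      refine ⟨j0, α j0 - 1, r1, α r1 - 1, by omega, by omega, ?_, ?_, by omega⟩
      · dsimp only; rw [if_pos ⟨rfl, rfl⟩]; omega
      · dsimp only
        have hnh : ¬(r1 = j0 ∧ α r1 - 1 = α j0 - 1) := fun h => hr1ne h.1
        rw [if_neg hnh, hcanon]
        omega
    · rw [if_neg hh, hcanon] at hτd
      have hbc := hval i c hc hh
      have hTi := T_eq β σ i
      rcases Nat.eq_zero_or_pos c with rfl | hcpos
      · exfalso
        apply hnd
        have hine : (σ i : ℕ) < ℓ := by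
          by_contra hx
          push_neg at hx
          have hx2 : (σ i : ℕ) = ℓ := by have := (σ i).isLt; omega
          have hij : i = j0 := σ.injective (Fin.val_injective (hx2.trans hσj0v.symm))
          subst hij
          rw [hTj0] at hτd
          omega
        set i2 := σ.symm ⟨(σ i : ℕ) + 1, by omega⟩ with hi2
        have hσi2 : (σ i2 : ℕ) = (σ i : ℕ) + 1 := by rw [hi2, Equiv.apply_symm_apply]
        have hTS : T β σ i = S β σ i2 := T_eq_S_of_succ β σ i i2 (by omega)
        have hTi2 := T_eq β σ i2
        have hβi2 := hβpos i2
        have hβlei2 := hβle i2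
        have hnh2 : ¬(i2 = j0 ∧ β i2 - 1 = α j0 - 1) := by
          rintro ⟨hij, hcc⟩
          rw [hij, hβj0] at hcc
          omega
        refine ⟨i, 0, i2, β i2 - 1, hc, by omega, ?_, ?_, by omega⟩
        · dsimp only; rw [if_neg hh, hcanon]; exact hτd
        · dsimp only; rw [if_neg hnh2, hcanon]
          omega
      · refine ⟨c - 1, by omega, ?_⟩
        dsimp only
        have hnh : ¬(i = j0 ∧ c - 1 = α j0 - 1) := by
          rintro ⟨hij, hcc⟩
          subst hij
          rw [hβj0] at hbc
          omega
        rw [if_neg hnh, hcanon]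
        have := hTβ i
        omega
end

section
/- Let λ be a partition, σ ∈ S_{ℓ(λ)}, and 1 ≤ i ≤ ℓ(λ)−1 with ℓ(σs_i) < ℓ(σ). Then the bijection ψ^{σs_i}_σ := φ_{σs_i} ∘ ρ_σ maps the set SPCT^σ(α) bijectively onto the disjoint union ⨆_{β : α = β∙π_i} SPCT^{σs_i}(β), for every composition α with sorted rearrangement λ; moreover ψ^{σs_i}_σ preserves descent sets. -/
/-- The bubble-sorting operator `β ∙ πᵢ` (0-based indices). -/
def bub {ℓ : ℕ} (i : ℕ) (α : Fin ℓ → ℕ) : Fin ℓ → ℕ :=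
  if h : i + 1 < ℓ then
    if α ⟨i, Nat.lt_of_succ_lt h⟩ < α ⟨i + 1, h⟩ then
      fun x => α (Equiv.swap (⟨i, Nat.lt_of_succ_lt h⟩ : Fin ℓ) ⟨i + 1, h⟩ x)
    else α
  else α

/-- The simple transposition `sᵢ ∈ S_ℓ` (0-based). -/
def sPerm (ℓ : ℕ) (i : ℕ) : Equiv.Perm (Fin ℓ) :=
  if h : i + 1 < ℓ then Equiv.swap ⟨i, Nat.lt_of_succ_lt h⟩ ⟨i + 1, h⟩ else 1

/-- The Coxeter length of a permutation = its number of inversions. -/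
def permLength {ℓ : ℕ} (σ : Equiv.Perm (Fin ℓ)) : ℕ :=
  (Finset.univ.filter (fun p : Fin ℓ × Fin ℓ => p.1 < p.2 ∧ σ p.2 < σ p.1)).card

/-- Two fillings have the same set of entries in every column. -/
def SameColumns {ℓ : ℕ} (α β : Fin ℓ → ℕ) (τ τ' : Fin ℓ → ℕ → ℕ) : Prop :=
  ∀ (c v : ℕ), (∃ r, c < α r ∧ τ r c = v) ↔ (∃ r, c < β r ∧ τ' r c = v)


/-!
An SPCT with positive rows is determined by its type and its column sets: the type orders
column 0, and the triple condition places the entries of each later column, from the largest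
down, into forced rows. So `ψ` is the unique column-preserving correspondence, and it preserves
descents, which only compare column indices.

For existence, write `I = i` and `J = i + 1`. If `σ J < σ I`, row `I` dominates row `J`, and
exchanging the first `t` entries of the two rows, where `t` is the first column at which row `I`
can continue the prefix of row `J`, gives an SPCT of type `σ sᵢ`; when no such column exists the
whole rows are exchanged and the parts `α I`, `α J` trade places. In the other direction the cut
is at the first column where row `I` overtakes row `J`. In both cases the two shapes are related
by `β ∙ πᵢ = α`.
-/
open Equiv

section Columns

variable {ℓ : ℕ} {α β γ : Fin ℓ → ℕ} {τ τ' τ'' : Fin ℓ → ℕ → ℕ}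

theorem SameColumns.symm (h : SameColumns α β τ τ') : SameColumns β α τ' τ :=
  fun c v => (h c v).symm

theorem SameColumns.trans (h : SameColumns α β τ τ') (h' : SameColumns β γ τ' τ'') :
    SameColumns α γ τ τ'' :=
  fun c v => (h c v).trans (h' c v)

theorem SameColumns.isDescent (h : SameColumns α β τ τ') {d : ℕ} (hd : IsDescent α τ d) :
    IsDescent β τ' d := by
  obtain ⟨r, c, r', c', hc, hc', hd, hd', hle⟩ := hd
  obtain ⟨s, hs, hsd⟩ := (h c d).mp ⟨r, hc, hd⟩
  obtain ⟨s', hs', hsd'⟩ := (h c' (d + 1)).mp ⟨r', hc', hd'⟩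
  exact ⟨s, c, s', c', hs, hs', hsd, hsd', hle⟩

theorem SameColumns.isDescent_iff (h : SameColumns α β τ τ') (d : ℕ) :
    IsDescent α τ d ↔ IsDescent β τ' d :=
  ⟨h.isDescent, h.symm.isDescent⟩

end Columns

namespace IsSPCT

variable {ℓ n : ℕ} {α β : Fin ℓ → ℕ} {σ σ' : Perm (Fin ℓ)} {τ τ' : Fin ℓ → ℕ → ℕ}

theorem row_succ_lt (h : IsSPCT n α σ τ) {r : Fin ℓ} {c : ℕ} (hc : c + 1 < α r) :
    τ r (c + 1) < τ r c :=
  (h.2.2.2.2.1 r c hc).lt_of_ne fun he => by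
    have := (h.2.1 r (c + 1) r c hc (by omega) he).2
    omega

theorem lt_of_lt_of_col_le (h : IsSPCT n α σ τ) {a b : Fin ℓ} (hab : a < b) {c₀ : ℕ}
    (hc₀ : c₀ < α a) (hlt : τ b c₀ < τ a c₀) {c : ℕ} (hc : c₀ ≤ c) (hcb : c < α b) :
    c < α a ∧ τ b c < τ a c := by
  induction c, hc using Nat.le_induction with
  | base => exact ⟨hc₀, hlt⟩
  | succ c _ ih =>
    obtain ⟨hca, hlt⟩ := ih (by omega)
    exact h.2.2.2.2.2 a b c hab hca hcb ((h.2.2.2.2.1 b c hcb).trans_lt hlt)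

theorem strictMono_firstCol (h : IsSPCT n α σ τ) : StrictMono fun x => τ (σ.symm x) 0 :=
  fun x y hxy => (h.2.2.2.1 _ _).mpr (by simpa using hxy)

theorem firstCol_eq (h : IsSPCT n α σ τ) (h' : IsSPCT n β σ τ') (hα : ∀ r, 0 < α r)
    (hβ : ∀ r, 0 < β r) (hcol : SameColumns α β τ τ') (r : Fin ℓ) : τ r 0 = τ' r 0 := by
  have hrange : Set.range (fun r => τ r 0) = Set.range (fun r => τ' r 0) := by
    ext v
    exact ⟨fun ⟨r, hr⟩ => let ⟨s, _, hs⟩ := (hcol 0 v).mp ⟨r, hα r, hr⟩; ⟨s, hs⟩,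
      fun ⟨r, hr⟩ => let ⟨s, _, hs⟩ := (hcol 0 v).mpr ⟨r, hβ r, hr⟩; ⟨s, hs⟩⟩
  have := (h.strictMono_firstCol.range_inj h'.strictMono_firstCol).mp <|
    (σ.symm.surjective.range_comp _).trans (hrange.trans (σ.symm.surjective.range_comp _).symm)
  simpa using congrFun this (σ r)

/-- An entry of column `c + 1` that sits higher in `τ` than in `τ'` forces, through the triple
condition of `τ'`, a strictly larger entry of the same column into its row of `τ'`. -/
theorem not_lt_of_succCol_eq (h : IsSPCT n α σ τ) (h' : IsSPCT n β σ' τ')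
    (hcol : SameColumns α β τ τ') {c : ℕ} (hprev : ∀ r, c < α r → c < β r ∧ τ r c = τ' r c)
    {r r' : Fin ℓ} (hr : c + 1 < α r) (hr' : c + 1 < β r') (hv : τ r (c + 1) = τ' r' (c + 1))
    (habove : ∀ s s', c + 1 < α s → c + 1 < β s' → τ r (c + 1) < τ s (c + 1) →
      τ s (c + 1) = τ' s' (c + 1) → s = s') :
    ¬ r < r' := by
  intro hrr
  obtain ⟨hrβ, hτr⟩ := hprev r (by omega)
  obtain ⟨hr'β, hlt⟩ :=
    h'.2.2.2.2.2 r r' c hrr hrβ hr' (by rw [← hv, ← hτr]; exact h.row_succ_lt hr)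
  obtain ⟨s, hs, hsv⟩ := (hcol (c + 1) _).mpr ⟨r, hr'β, rfl⟩
  have := habove s r hs hr'β (by omega) hsv
  subst this
  omega

theorem row_eq_of_succCol_eq (h : IsSPCT n α σ τ) (h' : IsSPCT n β σ' τ')
    (hcol : SameColumns α β τ τ') {c : ℕ}
    (hprev : ∀ r, (c < α r ↔ c < β r) ∧ (c < α r → τ r c = τ' r c)) {r r' : Fin ℓ}
    (hr : c + 1 < α r) (hr' : c + 1 < β r') (hv : τ r (c + 1) = τ' r' (c + 1)) : r = r' := by
  induction hk : n - τ r (c + 1) using Nat.strong_induction_on generalizing r r' with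
  | _ k ih =>
    have habove : ∀ s s', c + 1 < α s → c + 1 < β s' → τ r (c + 1) < τ s (c + 1) →
        τ s (c + 1) = τ' s' (c + 1) → s = s' := fun s s' hs hs' hlt hss' =>
      ih _ (by have := (h.1 s _ hs).2; omega) hs hs' hss' rfl
    rcases lt_trichotomy r r' with hrr | hrr | hrr
    · exact absurd hrr (not_lt_of_succCol_eq h h' hcol
        (fun r hr => ⟨(hprev r).1.mp hr, (hprev r).2 hr⟩) hr hr' hv habove)
    · exact hrr
    · exact absurd hrr (not_lt_of_succCol_eq h' h hcol.symm
        (fun r hr => ⟨(hprev r).1.mpr hr, ((hprev r).2 ((hprev r).1.mpr hr)).symm⟩)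
        hr' hr hv.symm fun s s' hs hs' hlt hss' => (habove s' s hs' hs (by omega) hss'.symm).symm)

theorem eq_of_sameColumns (h : IsSPCT n α σ τ) (h' : IsSPCT n β σ τ') (hα : ∀ r, 0 < α r)
    (hβ : ∀ r, 0 < β r) (hcol : SameColumns α β τ τ') :
    α = β ∧ ∀ r c, c < β r → τ r c = τ' r c := by
  have key : ∀ c r, (c < α r ↔ c < β r) ∧ (c < α r → τ r c = τ' r c) := by
    intro c
    induction c with
    | zero => exact fun r => ⟨iff_of_true (hα r) (hβ r), fun _ => firstCol_eq h h' hα hβ hcol r⟩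
    | succ c ih =>
      intro r
      refine ⟨⟨fun hr => ?_, fun hr => ?_⟩, fun hr => ?_⟩
      · obtain ⟨r', hr', hv⟩ := (hcol (c + 1) _).mp ⟨r, hr, rfl⟩
        rwa [row_eq_of_succCol_eq h h' hcol ih hr hr' hv.symm]
      · obtain ⟨r', hr', hv⟩ := (hcol (c + 1) _).mpr ⟨r, hr, rfl⟩
        rwa [← row_eq_of_succCol_eq h h' hcol ih hr' hr hv]
      · obtain ⟨r', hr', hv⟩ := (hcol (c + 1) _).mp ⟨r, hr, rfl⟩
        rw [← hv, row_eq_of_succCol_eq h h' hcol ih hr hr' hv.symm]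
  exact ⟨funext fun r => eq_of_forall_lt_iff fun c => (key c r).1,
    fun r c hc => (key c r).2 ((key c r).1.mpr hc)⟩

end IsSPCT

section Swap

variable {ℓ : ℕ} {I J : Fin ℓ}

theorem swap_lt_swap_of_covBy (hIJ : I ⋖ J) {a b : Fin ℓ} (hab : a < b)
    (hne : ¬(a = I ∧ b = J)) : swap I J a < swap I J b := by
  have hv : (I : ℕ) + 1 = J := Nat.covBy_iff_add_one_eq.mp (Fin.covBy_iff.mp hIJ)
  simp only [Fin.ext_iff] at hne
  rw [Fin.lt_def] at hab ⊢
  simp only [swap_apply_def]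
  split_ifs <;> simp only [Fin.ext_iff] at * <;> omega

theorem lt_of_permLength_mul_swap_lt (hIJ : I ⋖ J) {σ : Perm (Fin ℓ)}
    (hlen : permLength (σ * swap I J) < permLength σ) : σ J < σ I := by
  by_contra! hσ
  refine hlen.not_ge (Finset.card_le_card_of_injOn (fun p => (swap I J p.1, swap I J p.2)) ?_ ?_)
  · rintro ⟨a, b⟩ hp
    simp only [Finset.coe_filter, Finset.mem_univ, true_and, Set.mem_ofPred_eq] at hp ⊢
    refine ⟨swap_lt_swap_of_covBy hIJ hp.1 ?_, by simpa using hp.2⟩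
    rintro ⟨rfl, rfl⟩
    exact hp.2.not_ge hσ
  · intro p _ q _ hpq
    simpa [Prod.ext_iff] using hpq

end Swap

section Bubble

variable {ℓ i : ℕ} {β : Fin ℓ → ℕ}

theorem sPerm_eq (hi : i + 1 < ℓ) : sPerm ℓ i = swap ⟨i, by omega⟩ ⟨i + 1, hi⟩ := dif_pos hi

theorem bub_of_le (hi : i + 1 < ℓ) (h : β ⟨i + 1, hi⟩ ≤ β ⟨i, by omega⟩) : bub i β = β := by
  rw [bub, dif_pos hi, if_neg h.not_gt]

theorem bub_of_ge (hi : i + 1 < ℓ) (h : β ⟨i, by omega⟩ ≤ β ⟨i + 1, hi⟩) :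
    bub i β = fun r => β (swap ⟨i, by omega⟩ ⟨i + 1, hi⟩ r) := by
  rw [bub, dif_pos hi]
  split_ifs with hlt
  · rfl
  · funext r
    rw [swap_apply_def]
    split_ifs <;> subst_vars <;> omega

end Bubble

section SwapPrefix

variable {ℓ n : ℕ} {α α' : Fin ℓ → ℕ} {σ : Perm (Fin ℓ)} {τ : Fin ℓ → ℕ → ℕ} {I J : Fin ℓ}
  {t c : ℕ}

def prefixSwap (I J : Fin ℓ) (t c : ℕ) : Perm (Fin ℓ) := if c < t then swap I J else 1

def swapPrefix (I J : Fin ℓ) (t : ℕ) (τ : Fin ℓ → ℕ → ℕ) : Fin ℓ → ℕ → ℕ :=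
  fun r c => τ (prefixSwap I J t c r) c

theorem prefixSwap_of_lt (hc : c < t) : prefixSwap I J t c = swap I J := if_pos hc

theorem prefixSwap_of_le (hc : t ≤ c) : prefixSwap I J t c = 1 := if_neg hc.not_gt

theorem prefixSwap_apply_of_ne {r : Fin ℓ} (hI : r ≠ I) (hJ : r ≠ J) :
    prefixSwap I J t c r = r := by
  unfold prefixSwap
  split_ifs
  exacts [swap_apply_of_ne_of_ne hI hJ, rfl]

theorem prefixSwap_lt_prefixSwap (hIJ : I ⋖ J) {a b : Fin ℓ} (hab : a < b)
    (hne : ¬(a = I ∧ b = J)) : prefixSwap I J t c a < prefixSwap I J t c b := by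
  unfold prefixSwap
  split_ifs
  exacts [swap_lt_swap_of_covBy hIJ hab hne, hab]

@[simp]
theorem prefixSwap_prefixSwap (r : Fin ℓ) : prefixSwap I J t c (prefixSwap I J t c r) = r := by
  unfold prefixSwap
  split_ifs
  exacts [swap_apply_self I J r, rfl]

theorem eq_of_prefixSwap_succ_ne {r : Fin ℓ}
    (h : prefixSwap I J t (c + 1) r ≠ prefixSwap I J t c r) : c + 1 = t ∧ (r = I ∨ r = J) := by
  unfold prefixSwap at h
  split_ifs at h with h1 h2 h2
  · exact absurd rfl h
  · omega
  · refine ⟨by omega, ?_⟩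
    by_contra! hr
    exact h (swap_apply_of_ne_of_ne hr.1 hr.2).symm
  · exact absurd rfl h

theorem lt_prefixSwap_iff_of_le (hI : t ≤ α I) (hJ : t ≤ α J) (r : Fin ℓ) (c : ℕ) :
    c < α r ↔ c < α (prefixSwap I J t c r) := by
  unfold prefixSwap
  split_ifs
  · rw [swap_apply_def]
    split_ifs <;> subst_vars <;> omega
  · rfl

theorem lt_prefixSwap_iff_of_ge (hI : α I ≤ t) (hJ : α J ≤ t) (r : Fin ℓ) (c : ℕ) :
    c < α (swap I J r) ↔ c < α (prefixSwap I J t c r) := by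
  unfold prefixSwap
  split_ifs
  · rfl
  · rw [Perm.one_apply, swap_apply_def]
    split_ifs <;> subst_vars <;> omega

theorem sameColumns_swapPrefix (hshape : ∀ r c, c < α' r ↔ c < α (prefixSwap I J t c r)) :
    SameColumns α α' τ (swapPrefix I J t τ) := by
  intro c v
  constructor
  · rintro ⟨r, hc, hv⟩
    exact ⟨prefixSwap I J t c r, by rwa [hshape, prefixSwap_prefixSwap],
      by rwa [swapPrefix, prefixSwap_prefixSwap]⟩
  · rintro ⟨r, hc, hv⟩
    exact ⟨_, (hshape r c).mp hc, hv⟩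

end SwapPrefix

namespace IsSPCT

variable {ℓ n : ℕ} {α α' : Fin ℓ → ℕ} {σ : Perm (Fin ℓ)} {τ : Fin ℓ → ℕ → ℕ} {I J : Fin ℓ}
  {t : ℕ}

theorem swapPrefix_succ_le (h : IsSPCT n α σ τ)
    (hshape : ∀ r c, c < α' r ↔ c < α (prefixSwap I J t c r))
    (hcross : t < α I → τ I t ≤ τ J (t - 1))
    (hafter : ∀ c, t ≤ c → c < α J → c < α I ∧ τ J c < τ I c)
    (r : Fin ℓ) (c : ℕ) (hc : c + 1 < α' r) :
    swapPrefix I J t τ r (c + 1) ≤ swapPrefix I J t τ r c := by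
  rw [hshape] at hc
  unfold swapPrefix
  by_cases hstable : prefixSwap I J t (c + 1) r = prefixSwap I J t c r
  · rw [hstable] at hc ⊢
    exact h.2.2.2.2.1 _ c hc
  obtain ⟨rfl, rfl | rfl⟩ := eq_of_prefixSwap_succ_ne hstable <;>
    simp only [prefixSwap_of_le le_rfl, prefixSwap_of_lt (Nat.lt_succ_self c), Perm.one_apply,
      swap_apply_left, swap_apply_right] at hc ⊢
  · simpa using hcross hc
  · obtain ⟨hI, hlt⟩ := hafter (c + 1) le_rfl hc
    exact hlt.le.trans (h.2.2.2.2.1 I c hI)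

theorem swapPrefix_pair
    (hshape : ∀ r c, c < α' r ↔ c < α (prefixSwap I J t c r))
    (hbefore : ∀ c, c + 1 < t → c + 1 < α I → c < α J → τ I (c + 1) < τ J c →
      c + 1 < α J ∧ τ I (c + 1) < τ J (c + 1))
    (hafter : ∀ c, t ≤ c → c < α J → c < α I ∧ τ J c < τ I c)
    {c : ℕ} (hca : c < α' I) (hcb : c + 1 < α' J)
    (hlt : swapPrefix I J t τ J (c + 1) < swapPrefix I J t τ I c) :
    c + 1 < α' I ∧ swapPrefix I J t τ J (c + 1) < swapPrefix I J t τ I (c + 1) := by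
  rw [hshape] at hca hcb ⊢
  unfold swapPrefix at hlt ⊢
  by_cases hct : c + 1 < t
  · simp only [prefixSwap_of_lt hct, prefixSwap_of_lt (c.lt_succ_self.trans hct),
      swap_apply_left, swap_apply_right] at hca hcb hlt ⊢
    exact hbefore c hct hcb hca hlt
  · simp only [prefixSwap_of_le (not_lt.mp hct), Perm.one_apply] at hcb ⊢
    exact hafter (c + 1) (not_lt.mp hct) hcb

theorem swapPrefix_triple (h : IsSPCT n α σ τ) (hIJ : I ⋖ J)
    (hshape : ∀ r c, c < α' r ↔ c < α (prefixSwap I J t c r))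
    (hbefore : ∀ c, c + 1 < t → c + 1 < α I → c < α J → τ I (c + 1) < τ J c →
      c + 1 < α J ∧ τ I (c + 1) < τ J (c + 1))
    (hcross : t < α I → τ I t ≤ τ J (t - 1))
    (hafter : ∀ c, t ≤ c → c < α J → c < α I ∧ τ J c < τ I c)
    (a b : Fin ℓ) (c : ℕ) (hab : a < b) (hca : c < α' a) (hcb : c + 1 < α' b)
    (hlt : swapPrefix I J t τ b (c + 1) < swapPrefix I J t τ a c) :
    c + 1 < α' a ∧ swapPrefix I J t τ b (c + 1) < swapPrefix I J t τ a (c + 1) := by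
  by_cases hpair : a = I ∧ b = J
  · obtain ⟨rfl, rfl⟩ := hpair
    exact swapPrefix_pair hshape hbefore hafter hca hcb hlt
  rw [hshape] at hca hcb ⊢
  unfold swapPrefix at hlt ⊢
  by_cases hstable : prefixSwap I J t (c + 1) a = prefixSwap I J t c a
  · rw [hstable]
    exact h.2.2.2.2.2 _ _ c (hstable ▸ prefixSwap_lt_prefixSwap hIJ hab hpair) hca hcb hlt
  obtain ⟨rfl, ha⟩ := eq_of_prefixSwap_succ_ne hstable
  have hJb : J < b := by
    rcases ha with ha | ha <;> subst a
    · exact (hIJ.ge_of_gt hab).lt_of_ne fun h => hpair ⟨rfl, h.symm⟩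
    · exact hab
  rw [prefixSwap_apply_of_ne (hIJ.lt.trans hJb).ne' hJb.ne'] at hcb hlt ⊢
  simp only [prefixSwap_of_le le_rfl, prefixSwap_of_lt (Nat.lt_succ_self c), Perm.one_apply]
    at hca hlt ⊢
  rcases ha with ha | ha <;> subst a
  · simp only [swap_apply_left] at hca hlt
    obtain ⟨hcJ, hbJ⟩ := h.2.2.2.2.2 J b c hJb hca hcb hlt
    obtain ⟨hcI, hJI⟩ := hafter (c + 1) le_rfl hcJ
    exact ⟨hcI, hbJ.trans hJI⟩
  · simp only [swap_apply_right] at hca hlt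
    obtain ⟨hcI, hbI⟩ := h.2.2.2.2.2 I b c (hIJ.lt.trans hJb) hca hcb hlt
    have hcJ : c < α J := by
      simpa [prefixSwap_of_lt (Nat.lt_succ_self c)] using
        (hshape I c).mp (c.lt_succ_self.trans
          ((hshape I (c + 1)).mpr (by simpa [prefixSwap_of_le le_rfl] using hcI)))
    exact h.2.2.2.2.2 J b c hJb hcJ hcb (hbI.trans_le (by simpa using hcross hcI))

/-- Only the two exchanged rows can break the SPCT conditions: `hbefore` is the triple condition
of the exchanged pair left of the cut, `hcross` the row condition of the new row `I` at the cut,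
and `hafter` says that row `I` dominates row `J` from the cut on. -/
theorem swapPrefix (h : IsSPCT n α σ τ) (hIJ : I ⋖ J) (ht : 0 < t)
    (hshape : ∀ r c, c < α' r ↔ c < α (prefixSwap I J t c r))
    (hbefore : ∀ c, c + 1 < t → c + 1 < α I → c < α J → τ I (c + 1) < τ J c →
      c + 1 < α J ∧ τ I (c + 1) < τ J (c + 1))
    (hcross : t < α I → τ I t ≤ τ J (t - 1))
    (hafter : ∀ c, t ≤ c → c < α J → c < α I ∧ τ J c < τ I c) :
    IsSPCT n α' (σ * swap I J) (swapPrefix I J t τ) ∧ SameColumns α α' τ (swapPrefix I J t τ) := by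
  refine ⟨⟨fun r c hc => h.1 _ c ((hshape r c).mp hc), fun a c b c' ha hb he => ?_,
    fun v hv hvn => ?_, fun a b => ?_, swapPrefix_succ_le h hshape hcross hafter,
    swapPrefix_triple h hIJ hshape hbefore hcross hafter⟩, sameColumns_swapPrefix hshape⟩
  · obtain ⟨hab, rfl⟩ := h.2.1 _ c _ c' ((hshape a c).mp ha) ((hshape b c').mp hb) he
    exact ⟨(prefixSwap I J t c).injective hab, rfl⟩
  · obtain ⟨r, c, hc, hv⟩ := h.2.2.1 v hv hvn
    exact ⟨prefixSwap I J t c r, c, by rwa [hshape, prefixSwap_prefixSwap],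
      by rwa [_root_.swapPrefix, prefixSwap_prefixSwap]⟩
  · simp only [_root_.swapPrefix, prefixSwap_of_lt ht, h.2.2.2.1, Perm.mul_apply]

theorem exists_swapPrefix_of_lt (h : IsSPCT n α σ τ) (hpos : ∀ r, 0 < α r) (hIJ : I ⋖ J)
    (hσ : σ J < σ I) :
    ∃ α' τ', (α' = α ∨ α' = fun r => α (swap I J r)) ∧ α J ≤ α I ∧
      IsSPCT n α' (σ * swap I J) τ' ∧ SameColumns α α' τ τ' := by
  classical
  have hdom : ∀ c, c < α J → c < α I ∧ τ J c < τ I c := fun c =>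
    h.lt_of_lt_of_col_le hIJ.lt (hpos I) ((h.2.2.2.1 J I).mpr hσ) c.zero_le
  have hJI : α J ≤ α I := by
    have := (hdom (α J - 1) (by have := hpos J; omega)).1
    omega
  have hex : ∃ t, 0 < t ∧ (α I ≤ t ∨ t ≤ α J ∧ τ I t ≤ τ J (t - 1)) :=
    ⟨α I, hpos I, Or.inl le_rfl⟩
  obtain ⟨ht, hP⟩ := Nat.find_spec hex
  have htI : Nat.find hex ≤ α I := Nat.find_min' hex ⟨hpos I, Or.inl le_rfl⟩
  set t := Nat.find hex
  have hbefore : ∀ c, c + 1 < t → c + 1 < α I → c < α J → τ I (c + 1) < τ J c →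
      c + 1 < α J ∧ τ I (c + 1) < τ J (c + 1) := fun c hct _ hcJ hlt =>
    absurd ⟨c.succ_pos, Or.inr ⟨hcJ, by simpa using hlt.le⟩⟩ (Nat.find_min hex hct)
  have hcross : t < α I → τ I t ≤ τ J (t - 1) := fun htI' => (hP.resolve_left htI'.not_ge).2
  by_cases htJ : t ≤ α J
  · exact ⟨α, _, Or.inl rfl, hJI, h.swapPrefix hIJ ht (lt_prefixSwap_iff_of_le htI htJ)
      hbefore hcross fun c _ => hdom c⟩
  · have hIt : α I ≤ t := hP.resolve_right fun h => htJ h.1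
    exact ⟨_, _, Or.inr rfl, hJI, h.swapPrefix hIJ ht (lt_prefixSwap_iff_of_ge hIt (by omega))
      hbefore hcross fun c _ => hdom c⟩

theorem exists_swapPrefix_of_gt (h : IsSPCT n α σ τ) (hpos : ∀ r, 0 < α r) (hIJ : I ⋖ J)
    (hσ : σ I < σ J) :
    ∃ α' τ', (α' = α ∧ α J ≤ α I ∨ α' = (fun r => α (swap I J r)) ∧ α I ≤ α J) ∧
      IsSPCT n α' (σ * swap I J) τ' ∧ SameColumns α α' τ τ' := by
  classical
  have hex : ∃ t, 0 < t ∧ (α J ≤ t ∨ t < α I ∧ τ J t < τ I t) := ⟨α J, hpos J, Or.inl le_rfl⟩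
  obtain ⟨ht, hP⟩ := Nat.find_spec hex
  have htJ : Nat.find hex ≤ α J := Nat.find_min' hex ⟨hpos J, Or.inl le_rfl⟩
  set t := Nat.find hex
  have hlow : ∀ c < t, c < α I → τ I c < τ J c := by
    intro c hct hcI
    rcases c.eq_zero_or_pos with rfl | hc
    · exact (h.2.2.2.1 I J).mpr hσ
    · have hne : τ I c ≠ τ J c := fun he => hIJ.lt.ne (h.2.1 I c J c hcI (by omega) he).1
      exact hne.lt_of_le (not_lt.mp fun hlt => Nat.find_min hex hct ⟨hc, Or.inr ⟨hcI, hlt⟩⟩)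
  have hcross : t < α I → τ I t ≤ τ J (t - 1) := fun htI => by
    have := h.2.2.2.2.1 I (t - 1) (by omega)
    rw [Nat.sub_add_cancel ht] at this
    exact this.trans (hlow (t - 1) (by omega) (by omega)).le
  have hafter : ∀ c, t ≤ c → c < α J → c < α I ∧ τ J c < τ I c := fun c htc hcJ => by
    obtain ⟨htI, hlt⟩ := hP.resolve_left (by omega)
    exact h.lt_of_lt_of_col_le hIJ.lt htI hlt htc hcJ
  have hbefore : ∀ c, c + 1 < t → c + 1 < α I → c < α J → τ I (c + 1) < τ J c →
      c + 1 < α J ∧ τ I (c + 1) < τ J (c + 1) := fun c hct hcI _ _ =>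
    ⟨by omega, hlow (c + 1) hct hcI⟩
  by_cases htI : t ≤ α I
  · have hJI : α J ≤ α I := by
      by_cases hJt : α J ≤ t
      · omega
      · have := (hafter (α J - 1) (by omega) (by omega)).1
        omega
    exact ⟨α, _, Or.inl ⟨rfl, hJI⟩,
      h.swapPrefix hIJ ht (lt_prefixSwap_iff_of_le htI htJ) hbefore hcross hafter⟩
  · have hJt : α J ≤ t := hP.resolve_right fun h => htI h.1.le
    exact ⟨_, _, Or.inr ⟨rfl, by omega⟩,
      h.swapPrefix hIJ ht (lt_prefixSwap_iff_of_ge (by omega) hJt) hbefore hcross hafter⟩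

end IsSPCT

theorem psi_bijection_general {ℓ n : ℕ} (lam : Fin ℓ → ℕ) (hpos : ∀ i, 0 < lam i)
    (σ : Equiv.Perm (Fin ℓ)) (i : ℕ) (hi : i + 1 < ℓ)
    (hlen : permLength (σ * sPerm ℓ i) < permLength σ) :
    (∀ (π : Equiv.Perm (Fin ℓ)) (τ : Fin ℓ → ℕ → ℕ),
      IsSPCT n (fun r => lam (π r)) σ τ →
      ∃ (β : Fin ℓ → ℕ) (τ' : Fin ℓ → ℕ → ℕ),
        (∃ π' : Equiv.Perm (Fin ℓ), β = fun r => lam (π' r)) ∧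
        bub i β = (fun r => lam (π r)) ∧
        IsSPCT n β (σ * sPerm ℓ i) τ' ∧
        SameColumns (fun r => lam (π r)) β τ τ' ∧
        (∀ d : ℕ, IsDescent (fun r => lam (π r)) τ d ↔ IsDescent β τ' d) ∧
        (∀ (β₂ : Fin ℓ → ℕ) (τ₂ : Fin ℓ → ℕ → ℕ),
          (∃ π' : Equiv.Perm (Fin ℓ), β₂ = fun r => lam (π' r)) →
          bub i β₂ = (fun r => lam (π r)) →
          IsSPCT n β₂ (σ * sPerm ℓ i) τ₂ →
          SameColumns (fun r => lam (π r)) β₂ τ τ₂ →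
          β₂ = β ∧ ∀ (r : Fin ℓ) (c : ℕ), c < β r → τ₂ r c = τ' r c)) ∧
    (∀ (β : Fin ℓ → ℕ) (τ' : Fin ℓ → ℕ → ℕ),
      (∃ π' : Equiv.Perm (Fin ℓ), β = fun r => lam (π' r)) →
      IsSPCT n β (σ * sPerm ℓ i) τ' →
      ∃ (π : Equiv.Perm (Fin ℓ)) (τ : Fin ℓ → ℕ → ℕ),
        IsSPCT n (fun r => lam (π r)) σ τ ∧
        bub i β = (fun r => lam (π r)) ∧
        SameColumns (fun r => lam (π r)) β τ τ' ∧
        (∀ (π₂ : Equiv.Perm (Fin ℓ)) (τ₂ : Fin ℓ → ℕ → ℕ),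
          IsSPCT n (fun r => lam (π₂ r)) σ τ₂ →
          SameColumns (fun r => lam (π₂ r)) β τ₂ τ' →
          (fun r => lam (π₂ r)) = (fun r => lam (π r)) ∧
          ∀ (r : Fin ℓ) (c : ℕ), c < lam (π r) → τ₂ r c = τ r c)) := by
  set I : Fin ℓ := ⟨i, by omega⟩
  set J : Fin ℓ := ⟨i + 1, hi⟩
  have hIJ : I ⋖ J := Fin.covBy_iff.mpr (Nat.covBy_iff_add_one_eq.mpr rfl)
  rw [sPerm_eq hi] at hlen ⊢
  have hσ : σ J < σ I := lt_of_permLength_mul_swap_lt hIJ hlen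
  refine ⟨fun π τ hτ => ?_, fun β τ' ⟨π', hβ⟩ hτ' => ?_⟩
  · obtain ⟨β, τ', hβ, hJI, hτ', hcol⟩ := hτ.exists_swapPrefix_of_lt (fun r => hpos _) hIJ hσ
    have hbub : bub i β = fun r => lam (π r) := by
      rcases hβ with rfl | rfl
      · exact bub_of_le hi hJI
      · rw [bub_of_ge hi (by simpa [I, J] using hJI)]
        exact funext fun r => congrArg (fun r => lam (π r)) (swap_apply_self _ _ r)
    obtain ⟨π', rfl⟩ : ∃ π' : Perm (Fin ℓ), β = fun r => lam (π' r) := by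
      rcases hβ with rfl | rfl
      exacts [⟨π, rfl⟩, ⟨π * swap I J, rfl⟩]
    refine ⟨_, τ', ⟨π', rfl⟩, hbub, hτ', hcol, hcol.isDescent_iff,
      fun β₂ τ₂ ⟨π₂, hβ₂⟩ _ hτ₂ hcol₂ => ?_⟩
    subst hβ₂
    exact hτ₂.eq_of_sameColumns hτ' (fun r => hpos _) (fun r => hpos _) (hcol₂.symm.trans hcol)
  · subst hβ
    have hσ' : (σ * swap I J) I < (σ * swap I J) J := by simpa using hσ
    obtain ⟨α, τ, hα, hτ, hcol⟩ := hτ'.exists_swapPrefix_of_gt (fun r => hpos _) hIJ hσ'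
    rw [mul_assoc, swap_mul_self, mul_one] at hτ
    obtain ⟨π, rfl, hbub⟩ : ∃ π : Perm (Fin ℓ),
        α = (fun r => lam (π r)) ∧ bub i (fun r => lam (π' r)) = fun r => lam (π r) := by
      rcases hα with ⟨rfl, hle⟩ | ⟨rfl, hle⟩
      exacts [⟨π', rfl, bub_of_le hi hle⟩, ⟨π' * swap I J, rfl, bub_of_ge hi hle⟩]
    refine ⟨π, τ, hτ, hbub, hcol.symm, fun π₂ τ₂ hτ₂ hcol₂ => ?_⟩
    exact hτ₂.eq_of_sameColumns hτ (fun r => hpos _) (fun r => hpos _) (hcol₂.trans hcol)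

/-- Let `λ` be a partition, `σ ∈ S_ℓ`, and `i` with `ℓ(σsᵢ) < ℓ(σ)`.  The map
`ψ^{σsᵢ}_σ = φ_{σsᵢ} ∘ ρ_σ` — characterized as the unique column-set preserving
correspondence — maps `SPCT^σ(α)` bijectively onto `⨆_{β : α = β∙πᵢ} SPCT^{σsᵢ}(β)` for
every composition `α` rearranging `λ`, and it preserves descent sets.  (Bijectivity is
expressed by existence and uniqueness in both directions.) -/
theorem psi_bijection {ℓ n : ℕ} (lam : Fin ℓ → ℕ) (hpos : ∀ i, 0 < lam i)
    (hdec : Antitone lam) (hsum : ∑ i, lam i = n)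
    (σ : Equiv.Perm (Fin ℓ)) (i : ℕ) (hi : i + 1 < ℓ)
    (hlen : permLength (σ * sPerm ℓ i) < permLength σ) :
    (∀ (π : Equiv.Perm (Fin ℓ)) (τ : Fin ℓ → ℕ → ℕ),
      IsSPCT n (fun r => lam (π r)) σ τ →
      ∃ (β : Fin ℓ → ℕ) (τ' : Fin ℓ → ℕ → ℕ),
        (∃ π' : Equiv.Perm (Fin ℓ), β = fun r => lam (π' r)) ∧
        bub i β = (fun r => lam (π r)) ∧
        IsSPCT n β (σ * sPerm ℓ i) τ' ∧
        SameColumns (fun r => lam (π r)) β τ τ' ∧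
        (∀ d : ℕ, IsDescent (fun r => lam (π r)) τ d ↔ IsDescent β τ' d) ∧
        (∀ (β₂ : Fin ℓ → ℕ) (τ₂ : Fin ℓ → ℕ → ℕ),
          (∃ π' : Equiv.Perm (Fin ℓ), β₂ = fun r => lam (π' r)) →
          bub i β₂ = (fun r => lam (π r)) →
          IsSPCT n β₂ (σ * sPerm ℓ i) τ₂ →
          SameColumns (fun r => lam (π r)) β₂ τ τ₂ →
          β₂ = β ∧ ∀ (r : Fin ℓ) (c : ℕ), c < β r → τ₂ r c = τ' r c)) ∧
    (∀ (β : Fin ℓ → ℕ) (τ' : Fin ℓ → ℕ → ℕ),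
      (∃ π' : Equiv.Perm (Fin ℓ), β = fun r => lam (π' r)) →
      IsSPCT n β (σ * sPerm ℓ i) τ' →
      ∃ (π : Equiv.Perm (Fin ℓ)) (τ : Fin ℓ → ℕ → ℕ),
        IsSPCT n (fun r => lam (π r)) σ τ ∧
        bub i β = (fun r => lam (π r)) ∧
        SameColumns (fun r => lam (π r)) β τ τ' ∧
        (∀ (π₂ : Equiv.Perm (Fin ℓ)) (τ₂ : Fin ℓ → ℕ → ℕ),
          IsSPCT n (fun r => lam (π₂ r)) σ τ₂ →
          SameColumns (fun r => lam (π₂ r)) β τ₂ τ' →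
          (fun r => lam (π₂ r)) = (fun r => lam (π r)) ∧
          ∀ (r : Fin ℓ) (c : ℕ), c < lam (π r) → τ₂ r c = τ r c)) :=
  psi_bijection_general lam hpos σ i hi hlen
end
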